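/- arXiv:1907.00956 — 5 statements merged into one kernel-verified Lean document; each statement's English description precedes it below -/
import Mathlib

section
/- For any execution of the dispersal rule on a graph environment G in which no two agents settle at the same instant, the directed graph G(t) is a tree (rooted at the source s) at every time t at which it is nonempty. -/
/-!
Model of Amir–Bruckstein "Fast Uniform Dispersion of a Crash-prone Swarm".

Agents are indexed by a type `A` (usually `ℕ`, agent `i` standing for `A_{i+1}`).
An execution is driven by an `EventOrder`: a sequence of events, each being the
activation or the deletion of a specified agent, at strictly increasing real times.
`cfg k` is the configuration before the `k`-th event.
-/

inductive AgentState (V : Type) where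
  | outside : AgentState V
  | mobile (v : V) : AgentState V
  | settled (v : V) (mark : Option V) : AgentState V
  | deleted : AgentState V

/-- The vertex occupied by an agent in a given state, if any. -/
def AgentState.pos {V : Type} : AgentState V → Option V
  | .outside => none
  | .mobile v => some v
  | .settled v _ => some v
  | .deleted => none

/-- A configuration: the state of each agent. -/
abbrev Config (A V : Type) := A → AgentState V

/-- Some settled agent occupies `v`. -/
def settledAt {A V : Type} (c : Config A V) (v : V) : Prop :=
  ∃ i m, c i = AgentState.settled v m

/-- Some mobile agent occupies `v`. -/
def mobileAt {A V : Type} (c : Config A V) (v : V) : Prop :=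
  ∃ i, c i = AgentState.mobile v

/-- The vertex `v` is empty. -/
def emptyAt {A V : Type} (c : Config A V) (v : V) : Prop :=
  ¬ settledAt c v ∧ ¬ mobileAt c v

/-- Vertex `u` contains exactly one agent: a settled agent marking `v`. -/
def soleSettledMarking {A V : Type} (c : Config A V) (u v : V) : Prop :=
  (∃ i, c i = AgentState.settled u (some v)) ∧ ¬ mobileAt c u

/-- A mobile agent at `v` has some vertex it could move to, per the local rule. -/
def canMoveFrom {A V : Type} (G : SimpleGraph V) (c : Config A V) (v : V) : Prop :=
  ∃ u, G.Adj v u ∧ (soleSettledMarking c u v ∨ emptyAt c u)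

/-- An outside agent `i` may enter the source `s`: all lower-indexed agents have
entered or been deleted, and `s` holds no mobile agent. -/
def canEnter {V : Type} (c : Config ℕ V) (s : V) (i : ℕ) : Prop :=
  (∀ j < i, c j ≠ AgentState.outside) ∧ ¬ mobileAt c s

/-- Each vertex holds at most one settled and at most one mobile agent. -/
def Capacity {A V : Type} (c : Config A V) : Prop :=
  (∀ v (i j : A) mi mj, c i = AgentState.settled v mi → c j = AgentState.settled v mj → i = j) ∧
  (∀ v (i j : A), c i = AgentState.mobile v → c j = AgentState.mobile v → i = j)

/-- An event: at `time`, the agent `agent` is activated (`isDel = false`) or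
activated-and-deleted (`isDel = true`). -/
structure Event where
  time : ℝ
  agent : ℕ
  isDel : Bool

/-- An event order: events at strictly increasing times, tending to infinity. -/
structure EventOrder where
  ev : ℕ → Event
  strict : StrictMono fun k => (ev k).time
  unbounded : Filter.Tendsto (fun k => (ev k).time) Filter.atTop Filter.atTop

/-- The legal outcomes `next` for the state of agent `i` when it is activated (and
not deleted) in configuration `c`, on environment `G` with source `s`.  This is
Algorithm 1 together with the entrance rule. -/
def ActOK {V : Type} (G : SimpleGraph V) (s : V) (c : Config ℕ V) (i : ℕ)
    (next : AgentState V) : Prop :=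
  match c i with
  | AgentState.outside =>
      (canEnter c s i ∧ emptyAt c s ∧ next = AgentState.settled s none) ∨
      (canEnter c s i ∧ ¬ emptyAt c s ∧ next = AgentState.mobile s) ∨
      (¬ canEnter c s i ∧ next = AgentState.outside)
  | AgentState.mobile v =>
      (∃ u, G.Adj v u ∧ soleSettledMarking c u v ∧ next = AgentState.mobile u) ∨
      ((¬ ∃ u, G.Adj v u ∧ soleSettledMarking c u v) ∧
        ∃ u, G.Adj v u ∧ emptyAt c u ∧ next = AgentState.settled u (some v)) ∨
      (¬ canMoveFrom G c v ∧ next = AgentState.mobile v)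
  | AgentState.settled v m => next = AgentState.settled v m
  | AgentState.deleted => next = AgentState.deleted

/-- Agent `i` attempts to move when activated in configuration `c`. -/
def AttemptsMove {V : Type} (G : SimpleGraph V) (s : V) (c : Config ℕ V) (i : ℕ) : Prop :=
  match c i with
  | AgentState.outside => canEnter c s i
  | AgentState.mobile v => canMoveFrom G c v
  | AgentState.settled _ _ => False
  | AgentState.deleted => False

/-- A simulation of an event order on the environment `G` with source `s`.
Deletions may occur at any scheduled deletion event (as is allowed when an event
order is simulated on an environment other than the one it arose from). -/
structure Exec (V : Type) (G : SimpleGraph V) (s : V) where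
  S : EventOrder
  cfg : ℕ → Config ℕ V
  init : ∀ i, cfg 0 i = AgentState.outside
  cap : ∀ k, Capacity (cfg k)
  frozen : ∀ k j, j ≠ (S.ev k).agent → cfg (k + 1) j = cfg k j
  act : ∀ k, (S.ev k).isDel = false →
    ActOK G s (cfg k) (S.ev k).agent (cfg (k + 1) (S.ev k).agent)
  del : ∀ k, (S.ev k).isDel = true → cfg (k + 1) (S.ev k).agent = AgentState.deleted

/-- An execution that could arise on the environment `G` itself: agents are
deleted only when activated and attempting to move. -/
structure ExecG (V : Type) (G : SimpleGraph V) (s : V) extends Exec V G s where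
  delLegal : ∀ k, (S.ev k).isDel = true → AttemptsMove G s (cfg k) (S.ev k).agent

/-- Agent `i` performs a successful move at step `k` (entering the source counts). -/
def movedAt {V : Type} {G : SimpleGraph V} {s : V} (E : Exec V G s) (i k : ℕ) : Prop :=
  ∃ v : V, (E.cfg (k + 1) i).pos = some v ∧ (E.cfg k i).pos ≠ some v

/-- The depth of agent `i` at step `k`: the number of successful moves made before `k`. -/
noncomputable def depth {V : Type} {G : SimpleGraph V} {s : V} (E : Exec V G s)
    (i k : ℕ) : ℕ :=
  Set.ncard {j | j < k ∧ movedAt E i j}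

/-- Slow vertices, relative to a parent function `par` describing the tree.
A vertex becomes slow when a mobile agent on it is activated and finds no vertex
it can move to, while all its descendants in the tree are already slow;
slowness persists forever. -/
inductive SlowVtx {V : Type} (G : SimpleGraph V) (s : V) (par : V → Option V)
    (E : Exec V G s) : ℕ → V → Prop
  | trigger (k : ℕ) (v : V) :
      (E.S.ev k).isDel = false →
      E.cfg k ((E.S.ev k).agent) = AgentState.mobile v →
      ¬ canMoveFrom G (E.cfg k) v →
      (∀ u, par u = some v → SlowVtx G s par E k u) →
      SlowVtx G s par E (k + 1) v
  | persist (k : ℕ) (v : V) : SlowVtx G s par E k v → SlowVtx G s par E (k + 1) v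

/-- Iterated parent map. -/
def parIter {V : Type} (par : V → Option V) : ℕ → V → Option V
  | 0, v => some v
  | m + 1, v => (par v).bind (parIter par m)

/-- A spanning tree of `G` rooted at `s`, given by a parent function. -/
structure SpanningTreeOn (V : Type) (G : SimpleGraph V) (s : V) where
  par : V → Option V
  root_iff : ∀ v, par v = none ↔ v = s
  adj : ∀ v u, par v = some u → G.Adj v u
  reach : ∀ v, ∃ m, parIter par m v = some s

/-- The marks of settled agents follow the tree `T` (so `G(t) ⊆ T` at all times). -/
def MarksFollow {V : Type} {G : SimpleGraph V} {s : V} (E : Exec V G s)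
    (T : SpanningTreeOn V G s) : Prop :=
  ∀ k i v m, E.cfg k i = AgentState.settled v m → T.par v = m

/-- Agents traverse only edges of the tree `T`, moving from parent to child
(entering the environment only at the root `s`). -/
def MovesOnTree {V : Type} {G : SimpleGraph V} {s : V} (E : Exec V G s)
    (T : SpanningTreeOn V G s) : Prop :=
  ∀ k i u, (E.cfg k i).pos ≠ some u → (E.cfg (k + 1) i).pos = some u →
    (u = s ∧ E.cfg k i = AgentState.outside) ∨
    (∃ v, (E.cfg k i).pos = some v ∧ T.par u = some v)

/-- Agent `i` is slow at step `k` (it occupies a slow vertex). -/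
def AgentSlow {V : Type} {G : SimpleGraph V} {s : V} (par : V → Option V)
    (E : Exec V G s) (k i : ℕ) : Prop :=
  ∃ v, (E.cfg k i).pos = some v ∧ SlowVtx G s par E k v

/-- Agent `i` is settled at step `k`. -/
def AgentSettled {V : Type} {G : SimpleGraph V} {s : V} (E : Exec V G s) (k i : ℕ) : Prop :=
  ∃ v m, E.cfg k i = AgentState.settled v m

/-- Parent function of the path graph `P(n)`: `v_0` is the root and the parent of
`v_{i+1}` is `v_i`. -/
def pathPar (n : ℕ) : Fin n → Option (Fin n) := fun v =>
  if _ : (v : ℕ) = 0 then none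
  else some ⟨(v : ℕ) - 1, lt_of_le_of_lt (Nat.sub_le _ _) v.isLt⟩

/-- The one-sided infinite path `P(∞)` on `ℕ`. -/
def pathInf : SimpleGraph ℕ := SimpleGraph.fromRel (fun a b => b = a + 1)

/-- Parent function of `P(∞)`, rooted at `0`. -/
def pathInfPar : ℕ → Option ℕ := fun v => if v = 0 then none else some (v - 1)

/-- The meaningful event times of an event order: `idx m` is the index of the
event `t_m`, the first event after `t_{m-1}` at which one of the agents
`A_1, …, A_{m+1}` (indices `0, …, m`) acts. -/
structure MeaningfulTimes (S : EventOrder) where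
  idx : ℕ → ℕ
  mono : StrictMono idx
  agent_le : ∀ m, (S.ev (idx m)).agent ≤ m
  first0 : ∀ k < idx 0, (S.ev k).agent ≠ 0
  least : ∀ m k, idx m < k → k < idx (m + 1) → ¬ ((S.ev k).agent ≤ m + 1)

/-- The directed graph of settled agents and their marks is a tree rooted at `s`:
`s` is settled; an agent has no mark exactly when it sits at `s`; marks point along
edges of `G` to settled vertices; and every settled vertex reaches `s` by a chain
of marks. -/
def IsMarkTree {V : Type} (G : SimpleGraph V) (s : V) (c : Config ℕ V) : Prop :=
  settledAt c s ∧
  (∀ i v m, c i = AgentState.settled v m → (m = none ↔ v = s)) ∧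
  (∀ i v u, c i = AgentState.settled v (some u) → G.Adj v u ∧ settledAt c u) ∧
  (∀ v, settledAt c v →
    ∃ (m : ℕ) (f : ℕ → V), f 0 = v ∧ f m = s ∧
      ∀ j < m, ∃ i, c i = AgentState.settled (f j) (some (f (j + 1))))

/-- The first step (as an extended natural) at which a predicate holds. -/
noncomputable def firstStep (P : ℕ → Prop) : ℕ∞ :=
  sInf {m : ℕ∞ | ∃ k : ℕ, m = (k : ℕ∞) ∧ P k}

/-- The number of events of `S` occurring before (real) time `t`; since event times
are strictly increasing, the configuration at time `t` is `cfg (stepsBefore S t)`. -/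
noncomputable def stepsBefore (S : EventOrder) (t : ℝ) : ℕ :=
  Set.ncard {k | (S.ev k).time < t}

/-- Statement (a): every non-deleted agent whose copy in `G` is neither slow nor
settled has depth in `G` at least its depth in `P(n)`. -/
def StmtA {V : Type} {G : SimpleGraph V} {s : V} (n : ℕ) (hn : 0 < n)
    (EG : Exec V G s) (TG : SpanningTreeOn V G s)
    (EP : Exec (Fin n) (SimpleGraph.pathGraph n) ⟨0, hn⟩) (k : ℕ) : Prop :=
  ∀ i, EG.cfg k i ≠ AgentState.deleted →
    ¬ (AgentSlow TG.par EG k i ∨ AgentSettled EG k i) →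
    depth EP i k ≤ depth EG i k

/-- Statement (b): for every non-deleted agent, if its copy in `P(n)` is slow or
settled then its copy in `G` is slow or settled, and its depth in `G` is at most
its depth in `P(n)`. -/
def StmtB {V : Type} {G : SimpleGraph V} {s : V} (n : ℕ) (hn : 0 < n)
    (EG : Exec V G s) (TG : SpanningTreeOn V G s)
    (EP : Exec (Fin n) (SimpleGraph.pathGraph n) ⟨0, hn⟩) (k : ℕ) : Prop :=
  ∀ i, EG.cfg k i ≠ AgentState.deleted →
    (AgentSlow (pathPar n) EP k i ∨ AgentSettled EP k i) →
    ((AgentSlow TG.par EG k i ∨ AgentSettled EG k i) ∧ depth EG i k ≤ depth EP i k)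

/-!
Every configuration reached on `G` satisfies two invariants: each mobile agent stands on a
vertex holding a settled agent, and, once some agent has settled, the marks form a tree
rooted at `s`. An event changes the state of a single agent, so the settled agents change
by at most one agent settling on an empty vertex. The first agent to settle does so at `s`;
any later one settles next to the settled vertex it came from and marks it, which attaches
a new leaf to the tree. Agents are deleted only while attempting to move, so a settled agent
is never removed.
-/

namespace MarkTree

variable {V : Type} {G : SimpleGraph V} {s : V}

def ReachesByMarks {A : Type} (c : Config A V) (v s : V) : Prop :=
  ∃ (m : ℕ) (f : ℕ → V), f 0 = v ∧ f m = s ∧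
    ∀ j < m, ∃ i, c i = AgentState.settled (f j) (some (f (j + 1)))

lemma ReachesByMarks.refl {A : Type} (c : Config A V) (s : V) : ReachesByMarks c s s :=
  ⟨0, fun _ => s, rfl, rfl, fun _ hj => absurd hj (Nat.not_lt_zero _)⟩

lemma ReachesByMarks.cons {A : Type} {c : Config A V} {u v : V} {i : A}
    (hi : c i = AgentState.settled u (some v)) (h : ReachesByMarks c v s) :
    ReachesByMarks c u s := by
  obtain ⟨m, f, hf0, hfm, hchain⟩ := h
  refine ⟨m + 1, fun j => Nat.casesOn j u f, rfl, hfm, ?_⟩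
  rintro (_ | j) hj
  · refine ⟨i, ?_⟩
    show c i = AgentState.settled u (some (f 0))
    rwa [hf0]
  · exact hchain j (Nat.lt_of_succ_lt_succ hj)

lemma ReachesByMarks.mono {A : Type} {c c' : Config A V} {v : V}
    (hcc' : ∀ i v m, c i = AgentState.settled v m → c' i = AgentState.settled v m)
    (h : ReachesByMarks c v s) : ReachesByMarks c' v s := by
  obtain ⟨m, f, hf0, hfm, hchain⟩ := h
  exact ⟨m, f, hf0, hfm, fun j hj => (hchain j hj).imp fun i => hcc' _ _ _⟩

lemma settledAt_mono {A : Type} {c c' : Config A V}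
    (hcc' : ∀ i v m, c i = AgentState.settled v m → c' i = AgentState.settled v m)
    {v : V} (hv : settledAt c v) : settledAt c' v := by
  obtain ⟨i, m, hi⟩ := hv
  exact ⟨i, m, hcc' i v m hi⟩

lemma _root_.IsMarkTree.congr {c c' : Config ℕ V}
    (hcc' : ∀ i v m, c i = AgentState.settled v m ↔ c' i = AgentState.settled v m)
    (hT : IsMarkTree G s c) : IsMarkTree G s c' := by
  have hto := fun i v m => (hcc' i v m).1
  have hfrom := fun i v m => (hcc' i v m).2
  obtain ⟨hs, hnone, hadj, hreach⟩ := hT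
  refine ⟨settledAt_mono hto hs, fun i v m hi => hnone i v m (hfrom i v m hi), ?_, ?_⟩
  · intro i v u hi
    obtain ⟨hvu, hu⟩ := hadj i v u (hfrom i v _ hi)
    exact ⟨hvu, settledAt_mono hto hu⟩
  · intro v hv
    exact ReachesByMarks.mono hto (hreach v (settledAt_mono hfrom hv))

structure Invariant (G : SimpleGraph V) (s : V) (c : Config ℕ V) : Prop where
  mobile_settled : ∀ i v, c i = AgentState.mobile v → settledAt c v
  isMarkTree : (∃ v, settledAt c v) → IsMarkTree G s c

lemma invariant_of_forall_outside {c : Config ℕ V} (hc : ∀ i, c i = AgentState.outside) :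
    Invariant G s c where
  mobile_settled i v hi := by simp [hc i] at hi
  isMarkTree := by
    rintro ⟨v, i, m, hi⟩
    simp [hc i] at hi

variable {c : Config ℕ V} {a : ℕ}

lemma update_settled_iff_of_not_settled {next : AgentState V}
    (hold : ∀ v m, c a ≠ AgentState.settled v m) (hnew : ∀ v m, next ≠ AgentState.settled v m)
    (i : ℕ) (v : V) (m : Option V) :
    c i = AgentState.settled v m ↔ Function.update c a next i = AgentState.settled v m := by
  by_cases hia : i = a
  · subst hia
    simp only [Function.update_self]
    exact ⟨fun h => absurd h (hold v m), fun h => absurd h (hnew v m)⟩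
  · rw [Function.update_of_ne hia]

lemma update_settled_of_not_settled {next : AgentState V}
    (hold : ∀ v m, c a ≠ AgentState.settled v m) (i : ℕ) (v : V) (m : Option V)
    (hi : c i = AgentState.settled v m) : Function.update c a next i = AgentState.settled v m := by
  have hia : i ≠ a := by rintro rfl; exact hold v m hi
  rwa [Function.update_of_ne hia]

lemma Invariant.update_of_not_settled {next : AgentState V} (h : Invariant G s c)
    (hold : ∀ v m, c a ≠ AgentState.settled v m) (hnew : ∀ v m, next ≠ AgentState.settled v m)
    (hmobile : ∀ w, next = AgentState.mobile w → settledAt c w) :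
    Invariant G s (Function.update c a next) := by
  have hiff := update_settled_iff_of_not_settled hold hnew
  have hto := fun i v m => (hiff i v m).1
  refine ⟨fun i w hi => settledAt_mono hto ?_, fun hne => h.isMarkTree ?_ |>.congr hiff⟩
  · by_cases hia : i = a
    · subst hia
      exact hmobile w (by simpa using hi)
    · exact h.mobile_settled i w (by rwa [Function.update_of_ne hia] at hi)
  · obtain ⟨v, hv⟩ := hne
    exact ⟨v, settledAt_mono (fun i v m => (hiff i v m).2) hv⟩

lemma Invariant.update_settle_source (h : Invariant G s c)
    (hnone : ¬ ∃ v, settledAt c v) :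
    Invariant G s (Function.update c a (AgentState.settled s none)) := by
  set c' := Function.update c a (AgentState.settled s none) with hc'
  have hsettled : ∀ i v m, c' i = AgentState.settled v m → v = s ∧ m = none := by
    intro i v m hi
    by_cases hia : i = a
    · subst hia
      simp only [c', Function.update_self, AgentState.settled.injEq] at hi
      exact ⟨hi.1.symm, hi.2.symm⟩
    · rw [hc', Function.update_of_ne hia] at hi
      exact absurd ⟨v, i, m, hi⟩ hnone
  refine ⟨fun i w hi => ?_, fun _ => ⟨⟨a, none, by simp [c']⟩, ?_, ?_, ?_⟩⟩
  · by_cases hia : i = a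
    · subst hia
      simp [c'] at hi
    · rw [hc', Function.update_of_ne hia] at hi
      exact absurd ⟨w, h.mobile_settled i w hi⟩ hnone
  · intro i v m hi
    obtain ⟨rfl, rfl⟩ := hsettled i v m hi
    simp
  · intro i v u hi
    simpa using (hsettled i v _ hi).2
  · rintro v ⟨i, m, hi⟩
    rw [(hsettled i v m hi).1]
    exact ReachesByMarks.refl c' s

lemma Invariant.update_settle_child {u v : V} (h : Invariant G s c)
    (ha : c a = AgentState.mobile v) (hvu : G.Adj v u) (hu : ¬ settledAt c u) :
    Invariant G s (Function.update c a (AgentState.settled u (some v))) := by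
  set c' := Function.update c a (AgentState.settled u (some v)) with hc'
  have hold : ∀ w m, c a ≠ AgentState.settled w m := by simp [ha]
  have hto := update_settled_of_not_settled (next := AgentState.settled u (some v)) hold
  have hnew : c' a = AgentState.settled u (some v) := Function.update_self ..
  have hcases : ∀ i w m, c' i = AgentState.settled w m →
      (w = u ∧ m = some v) ∨ c i = AgentState.settled w m := by
    intro i w m hi
    by_cases hia : i = a
    · subst hia
      rw [hnew, AgentState.settled.injEq] at hi
      exact Or.inl ⟨hi.1.symm, hi.2.symm⟩
    · rw [hc', Function.update_of_ne hia] at hi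
      exact Or.inr hi
  have hv : settledAt c v := h.mobile_settled a v ha
  obtain ⟨hs, hnone, hadj, hreach⟩ := h.isMarkTree ⟨v, hv⟩
  have hus : u ≠ s := by rintro rfl; exact hu hs
  refine ⟨fun i w hi => settledAt_mono hto ?_, fun _ => ⟨settledAt_mono hto hs, ?_, ?_, ?_⟩⟩
  · by_cases hia : i = a
    · subst hia
      simp [hnew] at hi
    · exact h.mobile_settled i w (by rwa [hc', Function.update_of_ne hia] at hi)
  · intro i w m hi
    rcases hcases i w m hi with ⟨rfl, rfl⟩ | hi
    · simp [hus]
    · exact hnone i w m hi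
  · intro i w x hi
    rcases hcases i w _ hi with ⟨rfl, hx⟩ | hi
    · cases hx
      exact ⟨hvu.symm, settledAt_mono hto hv⟩
    · obtain ⟨hwx, hx⟩ := hadj i w x hi
      exact ⟨hwx, settledAt_mono hto hx⟩
  · rintro w ⟨i, m, hi⟩
    rcases hcases i w m hi with ⟨rfl, -⟩ | hi
    · exact (ReachesByMarks.mono hto (hreach v hv)).cons hnew
    · exact ReachesByMarks.mono hto (hreach w ⟨i, m, hi⟩)

lemma Invariant.update_actOK {next : AgentState V} (h : Invariant G s c)
    (hact : ActOK G s c a next) : Invariant G s (Function.update c a next) := by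
  unfold ActOK at hact
  cases ha : c a with
  | outside =>
    rw [ha] at hact
    rcases hact with ⟨-, hempty, rfl⟩ | ⟨henter, hnonempty, rfl⟩ | ⟨-, rfl⟩
    · exact h.update_settle_source fun hne => hempty.1 (h.isMarkTree hne).1
    · refine h.update_of_not_settled (by simp [ha]) (by simp) ?_
      rintro w ⟨⟩
      by_contra hs
      exact hnonempty ⟨hs, henter.2⟩
    · rw [← ha, Function.update_eq_self]
      exact h
  | mobile v =>
    rw [ha] at hact
    rcases hact with ⟨u, -, ⟨⟨j, hj⟩, -⟩, rfl⟩ | ⟨-, u, hvu, hempty, rfl⟩ | ⟨-, rfl⟩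
    · refine h.update_of_not_settled (by simp [ha]) (by simp) ?_
      rintro w ⟨⟩
      exact ⟨j, some v, hj⟩
    · exact h.update_settle_child ha hvu hempty.1
    · rw [← ha, Function.update_eq_self]
      exact h
  | settled v m | deleted =>
    rw [ha] at hact
    rw [hact, ← ha, Function.update_eq_self]
    exact h

lemma Invariant.update_deleted (h : Invariant G s c) (hmove : AttemptsMove G s c a) :
    Invariant G s (Function.update c a AgentState.deleted) := by
  refine h.update_of_not_settled ?_ (by simp) (by simp)
  intro v m ha
  rw [AttemptsMove, ha] at hmove
  exact hmove

lemma _root_.Exec.cfg_succ (E : Exec V G s) (k : ℕ) :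
    E.cfg (k + 1) = Function.update (E.cfg k) (E.S.ev k).agent (E.cfg (k + 1) (E.S.ev k).agent) := by
  funext j
  by_cases hj : j = (E.S.ev k).agent
  · subst hj
    simp
  · rw [Function.update_of_ne hj, E.frozen k j hj]

lemma invariant_cfg (E : ExecG V G s) (k : ℕ) : Invariant G s (E.cfg k) := by
  induction k with
  | zero => exact invariant_of_forall_outside E.init
  | succ k ih =>
    rw [E.cfg_succ k]
    cases hdel : (E.S.ev k).isDel
    · exact ih.update_actOK (E.act k hdel)
    · rw [E.del k hdel]
      exact ih.update_deleted (E.delLegal k hdel)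

end MarkTree

theorem stmt0_general {V : Type} (G : SimpleGraph V) (s : V)
    (E : ExecG V G s) (k : ℕ) (hne : ∃ v, settledAt (E.cfg k) v) :
    IsMarkTree G s (E.cfg k) :=
  (MarkTree.invariant_cfg E k).isMarkTree hne

/-- For any execution of the dispersal rule on a graph
environment `G` (events occur sequentially at distinct times, so no two agents
settle at the same instant), the directed graph `G(t)` of settled agents and
their marks is a tree rooted at the source `s` at every time at which it is
nonempty. -/
theorem stmt0 {V : Type} [Fintype V] (G : SimpleGraph V) (hG : G.Connected) (s : V)
    (E : ExecG V G s) (k : ℕ) (hne : ∃ v, settledAt (E.cfg k) v) :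
    IsMarkTree G s (E.cfg k) :=
  stmt0_general G s E k hne
end

section
/- For any event order S on a graph environment G, at the slow makespan of S on G every vertex of G contains a settled agent; consequently the makespan (the first time at which G(t) is a spanning tree of G) is at most the slow makespan of S on G. -/
/-!
A vertex becomes slow only when a mobile agent standing on it is activated, and a mobile
agent only ever stands on a vertex that already holds a settled agent: it entered the
source when the source was occupied, or it moved onto a vertex whose sole agent was
settled. Settled agents never move and, since deletions only hit agents attempting to
move, are never deleted. Hence slow vertices are settled. Once every vertex is settled,
the marks are the parent pointers of the spanning tree `T_S`, so `G(t)` is that tree.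
-/

theorem firstStep_mono {P Q : ℕ → Prop} (h : ∀ k, Q k → P k) :
    firstStep P ≤ firstStep Q :=
  sInf_le_sInf fun _ ⟨k, hm, hk⟩ => ⟨k, hm, h k hk⟩

theorem exists_chain_of_parIter_eq_some {V : Type} {s : V} (par : V → Option V) :
    ∀ m v, parIter par m v = some s →
      ∃ f : ℕ → V, f 0 = v ∧ f m = s ∧ ∀ j < m, par (f j) = some (f (j + 1))
  | 0, v, h => ⟨fun _ => v, rfl, Option.some.inj h, by omega⟩
  | m + 1, v, h => by
    cases hp : par v with
    | none => simp [parIter, hp] at h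
    | some u =>
      simp only [parIter, hp, Option.bind_some] at h
      obtain ⟨f, hf0, hfm, hf⟩ := exists_chain_of_parIter_eq_some par m u h
      refine ⟨fun j => Nat.casesOn j v f, rfl, hfm, fun j hj => ?_⟩
      cases j with
      | zero => simpa [hf0] using hp
      | succ j => exact hf j (by omega)

namespace Exec

variable {V : Type} {G : SimpleGraph V} {s : V}

theorem settledAt_or_mobile_of_mobile_succ (E : Exec V G s) {k i : ℕ} {v : V}
    (hi : E.cfg (k + 1) i = .mobile v) :
    settledAt (E.cfg k) v ∨ E.cfg k i = .mobile v := by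
  by_cases hag : i = (E.S.ev k).agent
  swap
  · exact .inr (E.frozen k i hag ▸ hi)
  subst hag
  cases hdel : (E.S.ev k).isDel
  swap
  · simp [E.del k hdel] at hi
  have hact := E.act k hdel
  rw [hi] at hact
  rcases hc : E.cfg k (E.S.ev k).agent with _ | w | ⟨w, m⟩ | _ <;>
    simp only [ActOK, hc, AgentState.mobile.injEq, reduceCtorEq, and_false, exists_false,
      or_false, false_or] at hact
  case outside =>
    obtain ⟨⟨-, hs⟩, hne, rfl⟩ := hact
    left
    by_contra hns
    exact hne ⟨hns, hs⟩
  case mobile =>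
    rcases hact with ⟨u, -, ⟨⟨j, hj⟩, -⟩, rfl⟩ | ⟨-, rfl⟩
    · exact .inl ⟨j, _, hj⟩
    · exact .inr rfl

end Exec

namespace ExecG

variable {V : Type} {G : SimpleGraph V} {s : V} (EG : ExecG V G s)

theorem settled_succ {k i : ℕ} {v : V} {m : Option V}
    (h : EG.cfg k i = .settled v m) : EG.cfg (k + 1) i = .settled v m := by
  by_cases hag : i = (EG.S.ev k).agent
  · subst hag
    cases hdel : (EG.S.ev k).isDel with
    | false => simpa only [ActOK, h] using EG.act k hdel
    | true => simpa [AttemptsMove, h] using EG.delLegal k hdel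
  · rw [EG.frozen k i hag, h]

theorem settledAt_succ {k : ℕ} {v : V} (h : settledAt (EG.cfg k) v) :
    settledAt (EG.cfg (k + 1)) v :=
  let ⟨i, m, hi⟩ := h
  ⟨i, m, EG.settled_succ hi⟩

theorem settledAt_of_mobileAt {k : ℕ} {v : V} (h : mobileAt (EG.cfg k) v) :
    settledAt (EG.cfg k) v := by
  induction k generalizing v with
  | zero => obtain ⟨i, hi⟩ := h; simp [EG.init i] at hi
  | succ k ih =>
    obtain ⟨i, hi⟩ := h
    apply EG.settledAt_succ
    rcases EG.settledAt_or_mobile_of_mobile_succ hi with h | h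
    · exact h
    · exact ih ⟨i, h⟩

theorem settledAt_of_slowVtx (par : V → Option V) {k : ℕ} {v : V}
    (h : SlowVtx G s par EG.toExec k v) : settledAt (EG.cfg k) v := by
  induction h with
  | trigger k v _ hmob => exact EG.settledAt_succ (EG.settledAt_of_mobileAt ⟨_, hmob⟩)
  | persist k v _ ih => exact EG.settledAt_succ ih

theorem isMarkTree_of_forall_settledAt {TG : SpanningTreeOn V G s}
    (hmark : MarksFollow EG.toExec TG) {k : ℕ} (hall : ∀ v, settledAt (EG.cfg k) v) :
    IsMarkTree G s (EG.cfg k) := by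
  refine ⟨hall s, fun i v m h => hmark k i v m h ▸ TG.root_iff v,
    fun i v u h => ⟨TG.adj v u (hmark k i v _ h), hall u⟩, fun v _ => ?_⟩
  obtain ⟨m, hm⟩ := TG.reach v
  obtain ⟨f, hf0, hfm, hf⟩ := exists_chain_of_parIter_eq_some TG.par m v hm
  refine ⟨m, f, hf0, hfm, fun j hj => ?_⟩
  obtain ⟨i, m', hi⟩ := hall (f j)
  refine ⟨i, ?_⟩
  rw [hi, ← hmark k i _ _ hi, hf j hj]

end ExecG

theorem stmt1_general {V : Type} (G : SimpleGraph V) (s : V)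
    (EG : ExecG V G s) (TG : SpanningTreeOn V G s)
    (hmark : MarksFollow EG.toExec TG) :
    (∀ k, (∀ v, SlowVtx G s TG.par EG.toExec k v) → ∀ v, settledAt (EG.cfg k) v) ∧
    firstStep (fun k => (∀ v, settledAt (EG.cfg k) v) ∧ IsMarkTree G s (EG.cfg k)) ≤
      firstStep (fun k => ∀ v, SlowVtx G s TG.par EG.toExec k v) := by
  have settled_of_slow : ∀ k, (∀ v, SlowVtx G s TG.par EG.toExec k v) →
      ∀ v, settledAt (EG.cfg k) v :=
    fun _ h v => EG.settledAt_of_slowVtx TG.par (h v)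
  refine ⟨settled_of_slow, firstStep_mono fun k hk => ?_⟩
  have hall := settled_of_slow k hk
  exact ⟨hall, EG.isMarkTree_of_forall_settledAt hmark hall⟩

/-- For any event order on a graph environment `G` (presented as
an execution `EG` on `G`, with `TG` the spanning tree `T_S` it determines), at the
slow makespan every vertex of `G` contains a settled agent; consequently the
makespan — the first time `G(t)` is a spanning tree of `G` — is at most the slow
makespan of `S` on `G`. -/
theorem stmt1 {V : Type} [Fintype V] (G : SimpleGraph V) (hG : G.Connected) (s : V)
    (EG : ExecG V G s) (TG : SpanningTreeOn V G s)
    (hmark : MarksFollow EG.toExec TG) (hmove : MovesOnTree EG.toExec TG) :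
    (∀ k, (∀ v, SlowVtx G s TG.par EG.toExec k v) → ∀ v, settledAt (EG.cfg k) v) ∧
    firstStep (fun k => (∀ v, settledAt (EG.cfg k) v) ∧ IsMarkTree G s (EG.cfg k)) ≤
      firstStep (fun k => ∀ v, SlowVtx G s TG.par EG.toExec k v) :=
  stmt1_general G s EG TG hmark
end

section
/- If statement (b) is true at all meaningful event times up to time t_m, then no agent of P(n) that is settled or slow at time t_m moves or is deleted as a result of the event of S scheduled for time t_m (i.e., such agents still exist and occupy the same vertex at time t_{m+1}). -/
/-!
A slow vertex keeps a mobile agent that cannot move as long as no slow or settled agent is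
deleted: settled agents stay, so an occupied neighbour never becomes empty, and a neighbour
whose settled agent marks the slow vertex is a child in the tree, hence slow itself and
blocked by its own stuck mobile agent. On `P(n)` such deletions cannot happen before `t_m`:
at a meaningful time `t_{m'}` statement (b) makes the copy in `G` slow or settled, so it is
not attempting to move and cannot be deleted in `G`; at any other time the deleted agent has
not entered yet. Hence an agent that is slow or settled at `t_m` stays put at `t_m`; it has
index `< m`, and until `t_{m+1}` only agents of index `> m + 1` act.
-/

def SlowOrSettled {V : Type} {G : SimpleGraph V} {s : V} (par : V → Option V)
    (E : Exec V G s) (k i : ℕ) : Prop :=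
  AgentSlow par E k i ∨ AgentSettled E k i

section Step
variable {V : Type} {G : SimpleGraph V} {s : V} {c : Config ℕ V} {i : ℕ}

theorem ActOK.eq_of_not_attemptsMove {next : AgentState V} (h : ActOK G s c i next)
    (hna : ¬ AttemptsMove G s c i) : next = c i := by
  unfold ActOK at h
  unfold AttemptsMove at hna
  split at h <;> rename_i hc <;> rw [hc] at hna ⊢
  · simpa [hna] using h
  · rcases h with ⟨u, hadj, hu, -⟩ | ⟨-, u, hadj, hu, -⟩ | ⟨-, rfl⟩
    exacts [absurd ⟨u, hadj, .inl hu⟩ hna, absurd ⟨u, hadj, .inr hu⟩ hna, rfl]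
  all_goals exact h

theorem ActOK.settled_cases {w : V} {mk : Option V} (h : ActOK G s c i (.settled w mk)) :
    c i = .settled w mk ∨ (w = s ∧ mk = none ∧ emptyAt c s) ∨
      ∃ v, c i = .mobile v ∧ G.Adj v w ∧ emptyAt c w ∧ mk = some v := by
  unfold ActOK at h
  split at h <;> rename_i hc <;> simp_all

theorem ActOK.mobile_cases {w : V} (h : ActOK G s c i (.mobile w)) :
    c i = .mobile w ∨ (w = s ∧ settledAt c s) ∨
      ∃ v, c i = .mobile v ∧ soleSettledMarking c w v := by
  unfold ActOK at h
  split at h <;> rename_i hc <;> rw [hc]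
  · rcases h with ⟨-, -, h⟩ | ⟨⟨-, hs⟩, hne, h⟩ | ⟨-, h⟩ <;> cases h
    exact .inr (.inl ⟨rfl, by simpa [emptyAt, hs] using hne⟩)
  · rcases h with ⟨u, -, hu, h⟩ | ⟨-, u, -, -, h⟩ | ⟨-, h⟩ <;> cases h
    exacts [.inr (.inr ⟨_, rfl, hu⟩), .inl rfl]
  all_goals cases h

end Step

namespace Exec
variable {V : Type} {G : SimpleGraph V} {s : V} (E : Exec V G s)

theorem cfg_succ_cases (k j : ℕ) :
    E.cfg (k + 1) j = E.cfg k j ∨ E.cfg (k + 1) j = .deleted ∨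
      ActOK G s (E.cfg k) j (E.cfg (k + 1) j) := by
  by_cases hj : j = (E.S.ev k).agent
  · subst hj
    cases hd : (E.S.ev k).isDel
    exacts [.inr (.inr (E.act k hd)), .inr (.inl (E.del k hd))]
  · exact .inl (E.frozen k j hj)

theorem cfg_succ_eq_of_not_attemptsMove {k j : ℕ} (hna : ¬ AttemptsMove G s (E.cfg k) j)
    (hdel : (E.S.ev k).isDel = true → (E.S.ev k).agent ≠ j) :
    E.cfg (k + 1) j = E.cfg k j := by
  by_cases hj : j = (E.S.ev k).agent
  · subst hj
    cases hd : (E.S.ev k).isDel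
    exacts [(E.act k hd).eq_of_not_attemptsMove hna, absurd rfl (hdel hd)]
  · exact E.frozen k j hj

theorem settled_succ_cases {k j : ℕ} {w : V} {mk : Option V}
    (h : E.cfg (k + 1) j = .settled w mk) :
    E.cfg k j = .settled w mk ∨ (w = s ∧ mk = none ∧ emptyAt (E.cfg k) s) ∨
      ∃ v, E.cfg k j = .mobile v ∧ G.Adj v w ∧ emptyAt (E.cfg k) w ∧ mk = some v := by
  rcases E.cfg_succ_cases k j with he | he | hact
  · exact .inl (he ▸ h)
  · cases h ▸ he
  · exact (h ▸ hact).settled_cases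

theorem mobile_succ_cases {k j : ℕ} {w : V} (h : E.cfg (k + 1) j = .mobile w) :
    E.cfg k j = .mobile w ∨ (w = s ∧ settledAt (E.cfg k) s) ∨
      ∃ v, E.cfg k j = .mobile v ∧ soleSettledMarking (E.cfg k) w v := by
  rcases E.cfg_succ_cases k j with he | he | hact
  · exact .inl (he ▸ h)
  · cases h ▸ he
  · exact (h ▸ hact).mobile_cases

theorem cfg_eq_of_agent_ne {a b j : ℕ} (hab : a ≤ b)
    (h : ∀ k, a ≤ k → k < b → (E.S.ev k).agent ≠ j) : E.cfg b j = E.cfg a j := by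
  induction b, hab using Nat.le_induction with
  | base => rfl
  | succ b hab ih =>
    rw [E.frozen b j (h b hab (lt_add_one b)).symm,
      ih fun k hk hkb => h k hk (hkb.trans (lt_add_one b))]

def SettledKeptUntil (N : ℕ) : Prop :=
  ∀ k < N, ∀ j w mk, E.cfg k j = .settled w mk → E.cfg (k + 1) j = .settled w mk

variable {E} {N : ℕ}

theorem SettledKeptUntil.settledAt_succ (hset : E.SettledKeptUntil N) {k : ℕ} (hk : k < N)
    {u : V} (hu : settledAt (E.cfg k) u) : settledAt (E.cfg (k + 1)) u := by
  obtain ⟨j, mk, hj⟩ := hu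
  exact ⟨j, mk, hset k hk j u mk hj⟩

theorem SettledKeptUntil.settledAt_of_mobile (hset : E.SettledKeptUntil N) :
    ∀ k ≤ N, ∀ j w, E.cfg k j = .mobile w → settledAt (E.cfg k) w := by
  intro k
  induction k with
  | zero => intro _ j w h; cases E.init j ▸ h
  | succ k ih =>
    intro hk j w h
    have hk' : k < N := hk
    rcases E.mobile_succ_cases h with h' | ⟨rfl, hs⟩ | ⟨v, -, ⟨j', hj'⟩, -⟩
    · exact hset.settledAt_succ hk' (ih hk'.le j w h')
    · exact hset.settledAt_succ hk' hs
    · exact hset.settledAt_succ hk' ⟨j', _, hj'⟩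

theorem SettledKeptUntil.marks_of_tree {par : V → Option V} (hset : E.SettledKeptUntil N)
    (hroot : par s = none) (htree : ∀ u v, G.Adj u v → par u = some v ∨ par v = some u) :
    ∀ k ≤ N, (∀ j w mk, E.cfg k j = .settled w mk → par w = mk) ∧
      ∀ j w v, E.cfg k j = .mobile w → par w = some v → settledAt (E.cfg k) v := by
  intro k
  induction k with
  | zero =>
    refine fun _ => ⟨fun j w mk h => ?_, fun j w v h => ?_⟩ <;> cases E.init j ▸ h
  | succ k ih =>
    intro hk
    have hk' : k < N := hk
    obtain ⟨hmarks, hparent⟩ := ih hk'.le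
    refine ⟨fun j w mk h => ?_, fun j w v h hwv => ?_⟩
    · rcases E.settled_succ_cases h with h' | ⟨rfl, rfl, -⟩ | ⟨v, hv, hadj, hemp, rfl⟩
      · exact hmarks j w mk h'
      · exact hroot
      · -- the parent of the vertex left behind is settled, so the agent moved to a child
        exact (htree v w hadj).resolve_left fun hvw => hemp.1 (hparent _ _ _ hv hvw)
    · rcases E.mobile_succ_cases h with h' | ⟨rfl, -⟩ | ⟨v', hv', ⟨j', hj'⟩, -⟩
      · exact hset.settledAt_succ hk' (hparent j w v h' hwv)
      · simp [hroot] at hwv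
      · obtain rfl : v' = v := by simpa [hwv] using (hmarks j' w _ hj').symm
        exact hset.settledAt_succ hk' (hset.settledAt_of_mobile k hk'.le j v' hv')

end Exec

section Slow
variable {V : Type} {G : SimpleGraph V} {s : V} {par : V → Option V} {E : Exec V G s}

theorem SlowVtx.of_par {k : ℕ} {v u : V} (h : SlowVtx G s par E k v) (hu : par u = some v) :
    SlowVtx G s par E k u := by
  induction h with
  | trigger k v _ _ _ hch => exact .persist _ _ (hch u hu)
  | persist k v _ ih => exact .persist _ _ (ih hu)

theorem SlowOrSettled.cfg_ne_outside {k i : ℕ} (h : SlowOrSettled par E k i) :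
    E.cfg k i ≠ .outside := by
  rcases h with ⟨v, hpos, -⟩ | ⟨v, mk, h⟩ <;> intro hout
  · simp [hout, AgentState.pos] at hpos
  · cases hout ▸ h

variable {N : ℕ}
  (hpar : ∀ k ≤ N, ∀ j w mk, E.cfg k j = .settled w mk → par w = mk)
  (hdel : ∀ k ≤ N, (E.S.ev k).isDel = true → SlowOrSettled par E k (E.S.ev k).agent →
    AttemptsMove G s (E.cfg k) (E.S.ev k).agent)
include hdel

theorem settledKeptUntil_of_deletions : E.SettledKeptUntil N := by
  intro k hk j w mk h
  have hna : ¬ AttemptsMove G s (E.cfg k) j := by simp [AttemptsMove, h]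
  refine (E.cfg_succ_eq_of_not_attemptsMove hna ?_).trans h
  rintro hd rfl
  exact hna (hdel k hk.le hd (.inr ⟨w, mk, h⟩))

include hpar

theorem slowVtx_stuck : ∀ k ≤ N, ∀ v, SlowVtx G s par E k v →
    mobileAt (E.cfg k) v ∧ ¬ canMoveFrom G (E.cfg k) v := by
  have hset := settledKeptUntil_of_deletions hdel
  intro k
  induction k with
  | zero => intro _ v h; cases h
  | succ k ih =>
    intro hk v hv
    have hk' : k < N := hk
    have stays : ∀ q w, E.cfg k q = .mobile w → SlowVtx G s par E k w →
        ¬ canMoveFrom G (E.cfg k) w → E.cfg (k + 1) q = .mobile w := by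
      intro q w hq hw hcm
      have hna : ¬ AttemptsMove G s (E.cfg k) q := by simpa [AttemptsMove, hq] using hcm
      refine (E.cfg_succ_eq_of_not_attemptsMove hna ?_).trans hq
      rintro hd rfl
      exact hna (hdel k hk'.le hd (.inl ⟨w, by simp [hq, AgentState.pos], hw⟩))
    obtain ⟨q, hq, hcm, hch, hq'⟩ : ∃ q, E.cfg k q = .mobile v ∧ ¬ canMoveFrom G (E.cfg k) v ∧
        (∀ u, par u = some v → SlowVtx G s par E k u) ∧ E.cfg (k + 1) q = .mobile v := by
      cases hv with
      | trigger _ _ hd hq hcm hch =>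
        refine ⟨_, hq, hcm, hch, (E.cfg_succ_eq_of_not_attemptsMove ?_ ?_).trans hq⟩
        · simpa [AttemptsMove, hq] using hcm
        · simp [hd]
      | persist _ _ hv =>
        obtain ⟨⟨q, hq⟩, hcm⟩ := ih hk'.le v hv
        exact ⟨q, hq, hcm, fun u hu => hv.of_par hu, stays q v hq hv hcm⟩
    refine ⟨⟨q, hq'⟩, ?_⟩
    rintro ⟨u, hadj, ⟨⟨j, hj⟩, hnomob⟩ | hemp⟩
    · -- the agent marking `v` from `u` was already there, so `u` is a slow child of `v`
      have hj' : E.cfg k j = .settled u (some v) := by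
        rcases E.settled_succ_cases hj with h | ⟨-, h, -⟩ | ⟨-, -, -, hemp, -⟩
        · exact h
        · cases h
        · exact absurd ⟨u, hadj, .inr hemp⟩ hcm
      have hu := hch u (hpar k hk'.le j u _ hj')
      obtain ⟨⟨q', hq'⟩, hcmu⟩ := ih hk'.le u hu
      exact hnomob ⟨q', stays q' u hq' hu hcmu⟩
    · have hu : settledAt (E.cfg k) u := by
        by_contra hns
        refine hcm ⟨u, hadj, .inr ⟨hns, ?_⟩⟩
        rintro ⟨q', hq'⟩
        exact hns (hset.settledAt_of_mobile k hk'.le q' u hq')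
      exact hemp.1 (hset.settledAt_succ hk' hu)

theorem not_attemptsMove_of_slowOrSettled {k j : ℕ} (hk : k ≤ N)
    (h : SlowOrSettled par E k j) : ¬ AttemptsMove G s (E.cfg k) j := by
  rcases h with ⟨v, hpos, hv⟩ | ⟨w, mk, h⟩
  · cases hj : E.cfg k j with
    | mobile w =>
      obtain rfl : w = v := by simpa [hj, AgentState.pos] using hpos
      simpa [AttemptsMove, hj] using (slowVtx_stuck hpar hdel k hk w hv).2
    | _ => simp [hj, AgentState.pos, AttemptsMove] at hpos ⊢
  · simp [AttemptsMove, h]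

theorem cfg_succ_eq_of_slowOrSettled {k j : ℕ} (hk : k ≤ N) (h : SlowOrSettled par E k j) :
    E.cfg (k + 1) j = E.cfg k j := by
  have hna := not_attemptsMove_of_slowOrSettled hpar hdel hk h
  exact E.cfg_succ_eq_of_not_attemptsMove hna fun hd hj => hna (hj ▸ hdel k hk hd (hj ▸ h))

end Slow

namespace ExecG
variable {V : Type} {G : SimpleGraph V} {s : V} (EG : ExecG V G s)

theorem cfg_succ_eq_of_not_attemptsMove {k j : ℕ} (hna : ¬ AttemptsMove G s (EG.cfg k) j) :
    EG.cfg (k + 1) j = EG.cfg k j :=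
  EG.toExec.cfg_succ_eq_of_not_attemptsMove hna fun hd hj => hna (hj ▸ EG.delLegal _ hd)

theorem not_attemptsMove_of_slowOrSettled {TG : SpanningTreeOn V G s}
    (hmark : MarksFollow EG.toExec TG) {k j : ℕ} (h : SlowOrSettled TG.par EG.toExec k j) :
    ¬ AttemptsMove G s (EG.cfg k) j :=
  _root_.not_attemptsMove_of_slowOrSettled (fun k _ => hmark k)
    (fun k _ hd _ => EG.delLegal k hd) le_rfl h

end ExecG

namespace MeaningfulTimes
variable {S : EventOrder} (M : MeaningfulTimes S)

theorem lt_idx_agent_of_ne_idx {k : ℕ} (hk : ∀ m, M.idx m ≠ k) :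
    k < M.idx (S.ev k).agent := by
  have hex : ∃ q, k < M.idx q := ⟨k + 1, (M.mono.id_le (k + 1)).trans_lt' (lt_add_one k)⟩
  by_contra! hle
  rcases hq : Nat.find hex with _ | q
  · have h0 : M.idx 0 ≤ k := (M.mono.monotone (Nat.zero_le _)).trans hle
    exact (hq ▸ Nat.find_spec hex).not_ge h0
  · have hkq : k < M.idx (q + 1) := hq ▸ Nat.find_spec hex
    have hqk : M.idx q < k :=
      (not_lt.mp (Nat.find_min hex (hq ▸ lt_add_one q))).lt_of_ne (hk q)
    have hagent : q + 1 < (S.ev k).agent := not_le.mp (M.least q k hqk hkq)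
    exact (hkq.trans (M.mono hagent)).not_ge hle

theorem lt_idx_pred_agent {k : ℕ} (hk : k < M.idx (S.ev k).agent) :
    0 < (S.ev k).agent ∧ k < M.idx ((S.ev k).agent - 1) := by
  rcases hp : (S.ev k).agent with _ | p
  · exact absurd hp (M.first0 k (hp ▸ hk))
  refine ⟨p.succ_pos, ?_⟩
  rw [Nat.add_sub_cancel]
  by_contra! hle
  rcases hle.eq_or_lt with rfl | hlt
  · have := M.agent_le p
    omega
  · exact M.least p k hlt (hp ▸ hk) (by simp [hp])

end MeaningfulTimes

theorem cfg_eq_outside_of_le_idx {V : Type} {G : SimpleGraph V} {s : V} {n : ℕ} {hn : 0 < n}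
    (EG : ExecG V G s) (EP : Exec (Fin n) (SimpleGraph.pathGraph n) ⟨0, hn⟩)
    (hS : EP.S = EG.S) (M : MeaningfulTimes EG.S) :
    ∀ k p, k ≤ M.idx p → EG.cfg k p = .outside ∧ EP.cfg k p = .outside := by
  intro k
  induction k with
  | zero => exact fun p _ => ⟨EG.init p, EP.init p⟩
  | succ k ih =>
    intro p hk
    obtain ⟨hG, hP⟩ := ih p (Nat.le_of_succ_le hk)
    by_cases hp : p = (EG.S.ev k).agent
    · -- agent `p - 1` has not entered yet, so `p` cannot enter in either environment
      obtain ⟨hpos, hk'⟩ := M.lt_idx_pred_agent (hp ▸ hk)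
      rw [← hp] at hpos hk'
      obtain ⟨hG', hP'⟩ := ih (p - 1) hk'.le
      have hnaG : ¬ AttemptsMove G s (EG.cfg k) p := by
        simp only [AttemptsMove, hG, canEnter]
        exact fun h => h.1 (p - 1) (by omega) hG'
      have hnaP : ¬ AttemptsMove (SimpleGraph.pathGraph n) ⟨0, hn⟩ (EP.cfg k) p := by
        simp only [AttemptsMove, hP, canEnter]
        exact fun h => h.1 (p - 1) (by omega) hP'
      refine ⟨(EG.cfg_succ_eq_of_not_attemptsMove hnaG).trans hG,
        (EP.cfg_succ_eq_of_not_attemptsMove hnaP fun hd hpk => ?_).trans hP⟩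
      rw [hS] at hd hpk
      exact hnaG (hpk ▸ EG.delLegal k hd)
    · exact ⟨(EG.frozen k p hp).trans hG, (EP.frozen k p (hS ▸ hp)).trans hP⟩

theorem pathPar_zero {n : ℕ} (hn : 0 < n) : pathPar n ⟨0, hn⟩ = none := by
  simp [pathPar]

theorem pathPar_of_pathGraph_adj {n : ℕ} {u v : Fin n} (h : (SimpleGraph.pathGraph n).Adj u v) :
    pathPar n u = some v ∨ pathPar n v = some u := by
  rcases SimpleGraph.pathGraph_adj.mp h with h | h
  · right; simp [pathPar, Fin.ext_iff]; omega
  · left; simp [pathPar, Fin.ext_iff]; omega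

section PathSimulation
variable {V : Type} {G : SimpleGraph V} {s : V} {n : ℕ} {hn : 0 < n}
  {EG : ExecG V G s} {TG : SpanningTreeOn V G s}
  {EP : Exec (Fin n) (SimpleGraph.pathGraph n) ⟨0, hn⟩} {M : MeaningfulTimes EG.S} {m : ℕ}
  (hmark : MarksFollow EG.toExec TG) (hS : EP.S = EG.S)
  (hb : ∀ m' ≤ m, StmtB n hn EG.toExec TG EP (M.idx m'))
include hmark hS hb

theorem path_not_deleted_of_slowOrSettled : ∀ k ≤ M.idx m, (EP.S.ev k).isDel = true →
    ¬ SlowOrSettled (pathPar n) EP k (EP.S.ev k).agent := by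
  intro k hk hd h
  rw [hS] at hd h
  by_cases hmean : ∃ m', M.idx m' = k
  · obtain ⟨m', rfl⟩ := hmean
    have hattempt := EG.delLegal _ hd
    by_cases hdelG : EG.cfg (M.idx m') (EG.S.ev (M.idx m')).agent = .deleted
    · simp [AttemptsMove, hdelG] at hattempt
    · exact EG.not_attemptsMove_of_slowOrSettled hmark
        (hb m' (M.mono.le_iff_le.mp hk) _ hdelG h).1 hattempt
  · exact h.cfg_ne_outside (cfg_eq_outside_of_le_idx EG EP hS M k _
      (M.lt_idx_agent_of_ne_idx (not_exists.mp hmean)).le).2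

theorem path_cfg_succ_eq_of_slowOrSettled {k i : ℕ} (hk : k ≤ M.idx m)
    (hi : SlowOrSettled (pathPar n) EP k i) : EP.cfg (k + 1) i = EP.cfg k i := by
  have hdel : ∀ k ≤ M.idx m, (EP.S.ev k).isDel = true →
      SlowOrSettled (pathPar n) EP k (EP.S.ev k).agent →
      AttemptsMove (SimpleGraph.pathGraph n) ⟨0, hn⟩ (EP.cfg k) (EP.S.ev k).agent :=
    fun k hk hd h => absurd h (path_not_deleted_of_slowOrSettled hmark hS hb k hk hd)
  have hmarks := (settledKeptUntil_of_deletions hdel).marks_of_tree (pathPar_zero hn)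
    fun _ _ => pathPar_of_pathGraph_adj
  exact cfg_succ_eq_of_slowOrSettled (fun k hk => (hmarks k hk).1) hdel hk hi

end PathSimulation

theorem stmt3_general {V : Type} (G : SimpleGraph V) (s : V)
    (n : ℕ) (hn : 0 < n)
    (EG : ExecG V G s) (TG : SpanningTreeOn V G s)
    (hmark : MarksFollow EG.toExec TG)
    (EP : Exec (Fin n) (SimpleGraph.pathGraph n) ⟨0, hn⟩) (hS : EP.S = EG.S)
    (M : MeaningfulTimes EG.S) (m : ℕ)
    (hb : ∀ m' ≤ m, StmtB n hn EG.toExec TG EP (M.idx m')) :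
    ∀ i, (AgentSlow (pathPar n) EP (M.idx m) i ∨ AgentSettled EP (M.idx m) i) →
      EP.cfg (M.idx (m + 1)) i = EP.cfg (M.idx m) i := by
  intro i hi
  have him : i < m := by
    by_contra! h
    exact SlowOrSettled.cfg_ne_outside hi (cfg_eq_outside_of_le_idx EG EP hS M _ i (M.mono.monotone h)).2
  rw [← path_cfg_succ_eq_of_slowOrSettled hmark hS hb le_rfl hi]
  refine EP.cfg_eq_of_agent_ne (M.mono (lt_add_one m)) fun k hk hk' hagent => ?_
  rw [hS] at hagent
  exact M.least m k hk hk' (by omega)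

/-- Lemma 4 of the paper. If statement (b) is true at all
meaningful event times up to `t_m`, then no agent of `P(n)` that is settled or
slow at `t_m` moves or is deleted as a result of the event scheduled for `t_m`:
such agents are in the same state at time `t_{m+1}`. -/
theorem stmt3 {V : Type} [Fintype V] (G : SimpleGraph V) (hG : G.Connected) (s : V)
    (n : ℕ) (hn : 0 < n)
    (EG : ExecG V G s) (TG : SpanningTreeOn V G s)
    (hmark : MarksFollow EG.toExec TG) (hmove : MovesOnTree EG.toExec TG)
    (EP : Exec (Fin n) (SimpleGraph.pathGraph n) ⟨0, hn⟩) (hS : EP.S = EG.S)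
    (M : MeaningfulTimes EG.S) (m : ℕ)
    (hb : ∀ m' ≤ m, StmtB n hn EG.toExec TG EP (M.idx m')) :
    ∀ i, (AgentSlow (pathPar n) EP (M.idx m) i ∨ AgentSettled EP (M.idx m) i) →
      EP.cfg (M.idx (m + 1)) i = EP.cfg (M.idx m) i :=
  stmt3_general G s n hn EG TG hmark EP hS M m hb
end

section
/- For any event order S and at any time t, the number of mobile agents that have crossed the edge (v_0, v_1) in the simulation of S on B is at most the number of agents that have entered P*(∞) plus the number of agents that were deleted before entering P*(∞), in the simulation of S on P*(∞), by time t. -/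
/-- State of an agent in the environment `P*(∞)` (vertices `1, 2, 3, …`, each
holding a never-activated settled dummy agent marking its predecessor): the
indexed agents never settle, so they are outside, at a vertex, or deleted. -/
inductive PState where
  | outside : PState
  | inside (p : ℕ) : PState
  | deleted : PState

def PState.pos : PState → Option ℕ
  | .outside => none
  | .inside p => some p
  | .deleted => none

/-- Entrance rule in `P*(∞)`: an agent enters at vertex `1` when no mobile agent
is there and all lower-indexed agents have entered or been deleted. -/
def starCanEnter (c : ℕ → PState) (i : ℕ) : Prop :=
  (∀ j < i, c j ≠ PState.outside) ∧ ¬ ∃ j, c j = PState.inside 1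

/-- The local rule in `P*(∞)`: since every vertex holds exactly one settled dummy
agent marking its predecessor, a mobile agent at `p` moves to `p + 1` exactly when
no mobile agent occupies `p + 1`. -/
def StarActOK (c : ℕ → PState) (i : ℕ) (next : PState) : Prop :=
  match c i with
  | PState.outside =>
      (starCanEnter c i ∧ next = PState.inside 1) ∨
      (¬ starCanEnter c i ∧ next = PState.outside)
  | PState.inside p =>
      ((¬ ∃ j, c j = PState.inside (p + 1)) ∧ next = PState.inside (p + 1)) ∨
      ((∃ j, c j = PState.inside (p + 1)) ∧ next = PState.inside p)
  | PState.deleted => next = PState.deleted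

/-- Simulation of an event order on `P*(∞)`. -/
structure ExecStar (S : EventOrder) where
  st : ℕ → ℕ → PState
  init : ∀ i, st 0 i = PState.outside
  frozen : ∀ k j, j ≠ (S.ev k).agent → st (k + 1) j = st k j
  act : ∀ k, (S.ev k).isDel = false →
    StarActOK (st k) (S.ev k).agent (st (k + 1) (S.ev k).agent)
  del : ∀ k, (S.ev k).isDel = true → st (k + 1) (S.ev k).agent = PState.deleted

def starMovedAt {S : EventOrder} (E : ExecStar S) (i k : ℕ) : Prop :=
  ∃ p, (E.st (k + 1) i).pos = some p ∧ (E.st k i).pos ≠ some p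

/-- Depth of agent `i` in `P*(∞)`: number of successful moves before step `k`. -/
noncomputable def starDepth {S : EventOrder} (E : ExecStar S) (i k : ℕ) : ℕ :=
  Set.ncard {j | j < k ∧ starMovedAt E i j}

/-- Agent `i` has entered `P*(∞)` at or before step `k`. -/
def everEntered {S : EventOrder} (E : ExecStar S) (k i : ℕ) : Prop :=
  ∃ j ≤ k, ∃ p, E.st j i = PState.inside p

/-- Simulation of an event order on the two-sided infinite path `B` (vertices
`ℤ`, each holding a settled dummy marking its left neighbour): agent `i`
(representing `A_{i+1}`) starts as a mobile agent at vertex `-i` (the paper's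
`v_{-i+1}` for the 1-indexed `A_i`); there is no entry process; an activated
agent moves one step right unless a mobile agent blocks it; agents are never
deleted — scheduled deletions are treated as ordinary activations. -/
structure ExecB (S : EventOrder) where
  pos : ℕ → ℕ → ℤ
  init : ∀ i, pos 0 i = -(i : ℤ)
  frozen : ∀ k j, j ≠ (S.ev k).agent → pos (k + 1) j = pos k j
  step : ∀ k,
    ((¬ ∃ j, pos k j = pos k (S.ev k).agent + 1) ∧
      pos (k + 1) (S.ev k).agent = pos k (S.ev k).agent + 1) ∨
    ((∃ j, pos k j = pos k (S.ev k).agent + 1) ∧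
      pos (k + 1) (S.ev k).agent = pos k (S.ev k).agent)

/-- Depth of agent `i` in `B`: number of successful moves before step `k`. -/
noncomputable def depthB {S : EventOrder} (E : ExecB S) (i k : ℕ) : ℕ :=
  Set.ncard {j | j < k ∧ E.pos (j + 1) i ≠ E.pos j i}

/-!
Both environments preserve the order of the agents: in `B` agent `i` stays strictly to the
right of agent `j > i`, and in `P*(∞)` the agents enter in index order and never overtake.
Coupling the two simulations, one shows by induction over the events that an agent inside
`P*(∞)` at vertex `p` is at a vertex `≤ p` of `B`, and that an agent which reached `v_1` in `B`
is no longer outside `P*(∞)`: when it crosses `(v_0, v_1)` in `B`, all lower agents are to its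
right in `B`, hence inside `P*(∞)` or deleted, and vertex `1` of `P*(∞)` is free, since a
blocker there would be a lower agent occupying `v_1` of `B`. So the agents past `v_0` in `B`
form a subset of the agents that have entered or been deleted in `P*(∞)`.
-/

namespace ExecB

variable {S : EventOrder} (E : ExecB S)

theorem pos_succ (k j : ℕ) :
    E.pos (k + 1) j = E.pos k j ∨
      (j = (S.ev k).agent ∧ (∀ l, E.pos k l ≠ E.pos k j + 1) ∧
        E.pos (k + 1) j = E.pos k j + 1) := by
  by_cases hj : j = (S.ev k).agent
  · subst hj
    rcases E.step k with ⟨hfree, hmove⟩ | ⟨-, hstay⟩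
    · exact Or.inr ⟨rfl, fun l hl => hfree ⟨l, hl⟩, hmove⟩
    · exact Or.inl hstay
  · exact Or.inl (E.frozen k j hj)

theorem pos_strictAnti (k : ℕ) : StrictAnti (E.pos k) := by
  intro i j hij
  induction k with
  | zero => simp only [E.init]; omega
  | succ k ih =>
    rcases E.pos_succ k i with hi | ⟨-, -, hi⟩ <;>
      rcases E.pos_succ k j with hj | ⟨-, hfree, hj⟩
    · omega
    · have := hfree i
      omega
    · omega
    · omega

end ExecB

namespace ExecStar

variable {S : EventOrder} (E : ExecStar S)

theorem st_succ_agent {k a : ℕ} (ha : (S.ev k).agent = a) :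
    E.st (k + 1) a = PState.deleted ∨
    (E.st (k + 1) a = E.st k a ∧
      (E.st k a = PState.outside → ¬ starCanEnter (E.st k) a) ∧
      ∀ p, E.st k a = PState.inside p → ∃ j, E.st k j = PState.inside (p + 1)) ∨
    (E.st k a = PState.outside ∧ starCanEnter (E.st k) a ∧ E.st (k + 1) a = PState.inside 1) ∨
    ∃ p, E.st k a = PState.inside p ∧ (∀ j, E.st k j ≠ PState.inside (p + 1)) ∧
      E.st (k + 1) a = PState.inside (p + 1) := by
  subst ha
  cases hdel : (S.ev k).isDel
  case true => exact Or.inl (E.del k hdel)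
  case false =>
    have hact := E.act k hdel
    cases hst : E.st k (S.ev k).agent with
    | outside =>
      simp only [StarActOK, hst] at hact
      rcases hact with ⟨hcan, hnext⟩ | ⟨hcan, hnext⟩
      · exact Or.inr (Or.inr (Or.inl ⟨rfl, hcan, hnext⟩))
      · exact Or.inr (Or.inl ⟨hnext, fun _ => hcan, by simp⟩)
    | inside p =>
      simp only [StarActOK, hst] at hact
      rcases hact with ⟨hfree, hnext⟩ | ⟨hblocked, hnext⟩
      · exact Or.inr (Or.inr (Or.inr ⟨p, rfl, fun j hj => hfree ⟨j, hj⟩, hnext⟩))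
      · refine Or.inr (Or.inl ⟨hnext, by simp, ?_⟩)
        rintro q ⟨rfl⟩
        exact hblocked
    | deleted =>
      simp only [StarActOK, hst] at hact
      exact Or.inl hact

theorem ne_outside_succ {k i : ℕ} (h : E.st k i ≠ PState.outside) :
    E.st (k + 1) i ≠ PState.outside := by
  by_cases hi : i = (S.ev k).agent
  · rcases E.st_succ_agent hi.symm with hnext | ⟨hnext, -⟩ | ⟨hout, -⟩ | ⟨p, -, -, hnext⟩
    · simp [hnext]
    · rwa [hnext]
    · exact absurd hout h
    · simp [hnext]
  · rwa [E.frozen k i hi]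

theorem ne_outside_of_le {j k i : ℕ} (hjk : j ≤ k) (h : E.st j i ≠ PState.outside) :
    E.st k i ≠ PState.outside := by
  induction k, hjk using Nat.le_induction with
  | base => exact h
  | succ k _ ih => exact E.ne_outside_succ ih

theorem finite_setOf_ne_outside (k : ℕ) : {i | E.st k i ≠ PState.outside}.Finite := by
  induction k with
  | zero => simp [E.init]
  | succ k ih =>
    refine (ih.insert (S.ev k).agent).subset fun i hi => ?_
    by_cases h : i = (S.ev k).agent
    · exact Or.inl h
    · exact Or.inr (by rwa [Set.mem_ofPred_eq, ← E.frozen k i h])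

theorem setOf_ne_outside_eq (k : ℕ) :
    {i | E.st k i ≠ PState.outside} =
      {i | everEntered E k i} ∪ {i | E.st k i = PState.deleted ∧ ¬ everEntered E k i} := by
  ext i
  simp only [Set.mem_ofPred_eq, Set.mem_union]
  constructor
  · intro h
    by_cases he : everEntered E k i
    · exact Or.inl he
    · cases hst : E.st k i with
      | outside => exact absurd hst h
      | inside p => exact absurd ⟨k, le_rfl, p, hst⟩ he
      | deleted => exact Or.inr ⟨rfl, he⟩
  · rintro (⟨j, hjk, p, hp⟩ | ⟨hdel, -⟩)
    · exact E.ne_outside_of_le hjk (by simp [hp])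
    · simp [hdel]

theorem one_le_of_inside (k : ℕ) {i p : ℕ} (h : E.st k i = PState.inside p) : 1 ≤ p := by
  induction k generalizing i p with
  | zero => simp [E.init] at h
  | succ k ih =>
    by_cases hi : i = (S.ev k).agent
    · rcases E.st_succ_agent hi.symm with hnext | ⟨hnext, -⟩ | ⟨-, -, hnext⟩ | ⟨q, -, -, hnext⟩
      · simp [hnext] at h
      · exact ih (hnext ▸ h)
      · rw [hnext] at h
        cases h
        exact le_rfl
      · rw [hnext] at h
        cases h
        omega
    · exact ih (E.frozen k i hi ▸ h)

theorem ne_outside_of_lt_of_inside (k : ℕ) {i j p : ℕ} (hji : j < i)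
    (h : E.st k i = PState.inside p) : E.st k j ≠ PState.outside := by
  induction k generalizing i p with
  | zero => simp [E.init] at h
  | succ k ih =>
    apply E.ne_outside_succ
    by_cases hi : i = (S.ev k).agent
    · rcases E.st_succ_agent hi.symm with hnext | ⟨hnext, -⟩ | ⟨-, hcan, -⟩ | ⟨q, hq, -, -⟩
      · simp [hnext] at h
      · exact ih hji (hnext ▸ h)
      · exact hcan.1 j hji
      · exact ih hji hq
    · exact ih hji (E.frozen k i hi ▸ h)

theorem inside_lt_of_lt (k : ℕ) {i j p q : ℕ} (hij : i < j)
    (hi : E.st k i = PState.inside p) (hj : E.st k j = PState.inside q) : q < p := by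
  induction k generalizing i j p q with
  | zero => simp [E.init] at hi
  | succ k ih =>
    by_cases hia : i = (S.ev k).agent
    · rw [E.frozen k j (by omega)] at hj
      rcases E.st_succ_agent hia.symm with hnext | ⟨hnext, -⟩ | ⟨hout, -⟩ | ⟨r, hr, -, hnext⟩
      · simp [hnext] at hi
      · exact ih hij (hnext ▸ hi) hj
      · exact absurd hout (E.ne_outside_of_lt_of_inside k hij hj)
      · rw [hnext] at hi
        cases hi
        have := ih hij hr hj
        omega
    rw [E.frozen k i hia] at hi
    by_cases hja : j = (S.ev k).agent
    · rcases E.st_succ_agent hja.symm with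
        hnext | ⟨hnext, -⟩ | ⟨-, hcan, hnext⟩ | ⟨r, hr, hfree, hnext⟩
      · simp [hnext] at hj
      · exact ih hij hi (hnext ▸ hj)
      · rw [hnext] at hj
        cases hj
        have hp1 : p ≠ 1 := by
          rintro rfl
          exact hcan.2 ⟨i, hi⟩
        have := E.one_le_of_inside k hi
        omega
      · rw [hnext] at hj
        cases hj
        have := ih hij hi hr
        have : p ≠ r + 1 := by
          rintro rfl
          exact hfree i hi
        omega
    · exact ih hij hi (E.frozen k j hja ▸ hj)

end ExecStar

section Coupling

variable {S : EventOrder} (EB : ExecB S) (Estar : ExecStar S)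

def Coupled (k : ℕ) : Prop :=
  (∀ i, 1 ≤ EB.pos k i → Estar.st k i ≠ PState.outside) ∧
  ∀ i p, Estar.st k i = PState.inside p → EB.pos k i ≤ p

variable {EB Estar}

theorem Coupled.zero : Coupled EB Estar 0 :=
  ⟨fun i h => by rw [EB.init] at h; omega, fun i p h => by simp [Estar.init] at h⟩

theorem Coupled.pos_nonpos_of_outside {k i : ℕ} (h : Coupled EB Estar k)
    (hi : Estar.st k i = PState.outside) : EB.pos k i ≤ 0 := by
  by_contra hpos
  exact h.1 i (by omega) hi

theorem Coupled.pos_eq_add_one_of_lt_of_inside {k : ℕ} (h : Coupled EB Estar k) {a j q : ℕ}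
    (hja : j < a) (hj : Estar.st k j = PState.inside (q + 1)) (ha : EB.pos k a = q) :
    EB.pos k j = EB.pos k a + 1 := by
  have := EB.pos_strictAnti k hja
  have := h.2 j _ hj
  omega

theorem Coupled.ne_outside_succ {k : ℕ} (h : Coupled EB Estar k) {i : ℕ}
    (hi : 1 ≤ EB.pos (k + 1) i) : Estar.st (k + 1) i ≠ PState.outside := by
  by_cases hia : i = (S.ev k).agent
  swap
  · rw [Estar.frozen k i hia]
    exact h.1 i (EB.frozen k i hia ▸ hi)
  by_cases hout : Estar.st k i = PState.outside
  swap
  · exact Estar.ne_outside_succ hout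
  have hle := h.pos_nonpos_of_outside hout
  obtain ⟨hfree, hmove⟩ :
      (∀ l, EB.pos k l ≠ EB.pos k i + 1) ∧ EB.pos (k + 1) i = EB.pos k i + 1 := by
    rcases EB.pos_succ k i with hstay | ⟨-, hmove⟩
    · omega
    · exact hmove
  have hcan : starCanEnter (Estar.st k) i := by
    refine ⟨fun j hji => h.1 j (by have := EB.pos_strictAnti k hji; omega), ?_⟩
    rintro ⟨j, hj⟩
    rcases lt_trichotomy j i with hji | rfl | hij
    · exact hfree j (h.pos_eq_add_one_of_lt_of_inside hji (q := 0) hj (by omega))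
    · simp [hout] at hj
    · exact Estar.ne_outside_of_lt_of_inside k hij hj hout
  rcases Estar.st_succ_agent hia.symm with
    hnext | ⟨-, hcan', -⟩ | ⟨-, -, hnext⟩ | ⟨p, hp, -, -⟩
  · simp [hnext]
  · exact absurd hcan (hcan' hout)
  · simp [hnext]
  · simp [hout] at hp

theorem Coupled.pos_le_succ {k : ℕ} (h : Coupled EB Estar k) {i p : ℕ}
    (hi : Estar.st (k + 1) i = PState.inside p) : EB.pos (k + 1) i ≤ p := by
  by_cases hia : i = (S.ev k).agent
  swap
  · rw [EB.frozen k i hia]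
    exact h.2 i p (Estar.frozen k i hia ▸ hi)
  have hstep : EB.pos (k + 1) i ≤ EB.pos k i + 1 := by
    rcases EB.pos_succ k i with hstay | ⟨-, -, hmove⟩ <;> omega
  rcases Estar.st_succ_agent hia.symm with hnext | ⟨hnext, -, hblocked⟩ | ⟨hout, -, hnext⟩ |
    ⟨q, hq, -, hnext⟩
  · simp [hnext] at hi
  · rw [hnext] at hi
    have hle := h.2 i p hi
    rcases EB.pos_succ k i with hstay | ⟨-, hfree, hmove⟩
    · omega
    obtain ⟨j, hj⟩ := hblocked p hi
    rcases lt_trichotomy j i with hji | rfl | hij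
    · have hlt : EB.pos k i < p := by
        by_contra hge
        exact hfree j (h.pos_eq_add_one_of_lt_of_inside hji hj (by omega))
      omega
    · simp [hi] at hj
    · have := Estar.inside_lt_of_lt k hij hi hj
      omega
  · rw [hnext] at hi
    cases hi
    have := h.pos_nonpos_of_outside hout
    omega
  · rw [hnext] at hi
    cases hi
    have := h.2 i q hq
    omega

theorem coupled (k : ℕ) : Coupled EB Estar k := by
  induction k with
  | zero => exact Coupled.zero
  | succ k ih => exact ⟨fun i => ih.ne_outside_succ, fun i p => ih.pos_le_succ⟩

end Coupling

/-- Lemma 9 of the paper. For any event order `S` and at any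
time, the number of mobile agents that have crossed the edge `(v_0, v_1)` of `B`
(i.e. that occupy a vertex of index `≥ 1`) is at most the number of agents that
have entered `P*(∞)` plus the number of agents that were deleted before entering
`P*(∞)`. -/
theorem stmt10 (S : EventOrder) (EB : ExecB S) (Estar : ExecStar S) (k : ℕ) :
    Set.ncard {i | 1 ≤ EB.pos k i} ≤
      Set.ncard {i | everEntered Estar k i} +
        Set.ncard {i | Estar.st k i = PState.deleted ∧ ¬ everEntered Estar k i} := by
  calc Set.ncard {i | 1 ≤ EB.pos k i}
      ≤ Set.ncard {i | Estar.st k i ≠ PState.outside} :=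
        Set.ncard_le_ncard (coupled k).1 (Estar.finite_setOf_ne_outside k)
    _ = Set.ncard ({i | everEntered Estar k i} ∪
          {i | Estar.st k i = PState.deleted ∧ ¬ everEntered Estar k i}) := by
        rw [Estar.setOf_ne_outside_eq]
    _ ≤ _ := Set.ncard_union_le _ _
end

section
/- In the synchronous model on a graph environment G with n vertices, if for every step t at most ct/2 agents are deleted before step t (where 0 ≤ c < 1), then the makespan of the dispersal rule — the first step at which the settled agents and their marks form a spanning tree of G — is at most 4(1−c)^{−1}·n. -/
/-- A synchronous execution of the dispersal rule on `G` with source `s`: time is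
discretized to steps and at every step all agents activate simultaneously.
`target k i` is the vertex agent `i` attempts to move to at step `k` (if any);
it is dictated by the local rule evaluated on the configuration at step `k`.
An adversary may delete an agent exactly when it attempts to move. -/
structure SyncExec (V : Type) (G : SimpleGraph V) (s : V) where
  cfg : ℕ → Config ℕ V
  target : ℕ → ℕ → Option V
  init : ∀ i, cfg 0 i = AgentState.outside
  cap : ∀ k, Capacity (cfg k)
  rule_outside : ∀ k i, cfg k i = AgentState.outside →
    (canEnter (cfg k) s i ∧ target k i = some s) ∨
    (¬ canEnter (cfg k) s i ∧ target k i = none)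
  rule_mobile : ∀ k i v, cfg k i = AgentState.mobile v →
    (∃ u, G.Adj v u ∧ soleSettledMarking (cfg k) u v ∧ target k i = some u) ∨
    ((¬ ∃ u, G.Adj v u ∧ soleSettledMarking (cfg k) u v) ∧
      ∃ u, G.Adj v u ∧ emptyAt (cfg k) u ∧ target k i = some u) ∨
    (¬ canMoveFrom G (cfg k) v ∧ target k i = none)
  rule_settled : ∀ k i v m, cfg k i = AgentState.settled v m → target k i = none
  rule_deleted : ∀ k i, cfg k i = AgentState.deleted → target k i = none
  upd_stay : ∀ k i, target k i = none → cfg (k + 1) i = cfg k i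
  upd_move : ∀ k i u, target k i = some u →
    cfg (k + 1) i = AgentState.deleted ∨
    (cfg k i = AgentState.outside ∧
      ((emptyAt (cfg k) s ∧ cfg (k + 1) i = AgentState.settled s none) ∨
       (¬ emptyAt (cfg k) s ∧ cfg (k + 1) i = AgentState.mobile s))) ∨
    (∃ v, cfg k i = AgentState.mobile v ∧
      ((emptyAt (cfg k) u ∧ cfg (k + 1) i = AgentState.settled u (some v)) ∨
       (soleSettledMarking (cfg k) u v ∧ cfg (k + 1) i = AgentState.mobile u)))

namespace Stmt16Aux

open AgentState

variable {V : Type} {G : SimpleGraph V} {s : V} (E : SyncExec V G s)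

/-- Settled agents keep their state. -/
lemma settled_step {k i v m} (h : E.cfg k i = settled v m) :
    E.cfg (k + 1) i = settled v m := by
  rw [E.upd_stay k i (E.rule_settled k i v m h)]; exact h

lemma deleted_step {k i} (h : E.cfg k i = deleted) :
    E.cfg (k + 1) i = deleted := by
  rw [E.upd_stay k i (E.rule_deleted k i h)]; exact h

lemma settled_mono {k k' i v m} (hk : k ≤ k') (h : E.cfg k i = settled v m) :
    E.cfg k' i = settled v m := by
  induction k', hk using Nat.le_induction with
  | base => exact h
  | succ n hn ih => exact settled_step E ih

lemma deleted_mono {k k' i} (hk : k ≤ k') (h : E.cfg k i = deleted) :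
    E.cfg k' i = deleted := by
  induction k', hk using Nat.le_induction with
  | base => exact h
  | succ n hn ih => exact deleted_step E ih

lemma settledAt_step {k v} (h : settledAt (E.cfg k) v) : settledAt (E.cfg (k + 1)) v := by
  obtain ⟨i, m, hi⟩ := h; exact ⟨i, m, settled_step E hi⟩

lemma settledAt_mono {k k' v} (hk : k ≤ k') (h : settledAt (E.cfg k) v) :
    settledAt (E.cfg k') v := by
  obtain ⟨i, m, hi⟩ := h; exact ⟨i, m, settled_mono E hk hi⟩

/-- A stuck mobile agent stays put. -/
lemma stuck_stays {k b v} (hb : E.cfg k b = mobile v)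
    (hs : ¬ canMoveFrom G (E.cfg k) v) : E.cfg (k + 1) b = mobile v := by
  rcases E.rule_mobile k b v hb with ⟨u, hadj, hsole, _⟩ | ⟨_, u, hadj, hemp, _⟩ | ⟨_, ht⟩
  · exact absurd ⟨u, hadj, Or.inl hsole⟩ hs
  · exact absurd ⟨u, hadj, Or.inr hemp⟩ hs
  · rw [E.upd_stay k b ht]; exact hb

/-- Case analysis for one step of an outside agent. -/
lemma outside_step_cases {k i} (h : E.cfg k i = outside) :
    (¬ canEnter (E.cfg k) s i ∧ E.cfg (k + 1) i = outside) ∨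
    (canEnter (E.cfg k) s i ∧
      (E.cfg (k + 1) i = deleted ∨
       (emptyAt (E.cfg k) s ∧ E.cfg (k + 1) i = settled s none) ∨
       (¬ emptyAt (E.cfg k) s ∧ E.cfg (k + 1) i = mobile s))) := by
  rcases E.rule_outside k i h with ⟨hce, htgt⟩ | ⟨hnce, htgt⟩
  · right
    refine ⟨hce, ?_⟩
    rcases E.upd_move k i s htgt with hd | ⟨_, hor⟩ | ⟨v', hv', _⟩
    · exact Or.inl hd
    · exact Or.inr hor
    · rw [h] at hv'; cases hv'
  · left; exact ⟨hnce, by rw [E.upd_stay k i htgt]; exact h⟩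

/-- Case analysis for one step of a mobile agent. -/
lemma mobile_step_cases {k b v} (hb : E.cfg k b = mobile v) :
    (¬ canMoveFrom G (E.cfg k) v ∧ E.cfg (k + 1) b = mobile v) ∨
    E.cfg (k + 1) b = deleted ∨
    (∃ u, G.Adj v u ∧ emptyAt (E.cfg k) u ∧ E.cfg (k + 1) b = settled u (some v)) ∨
    (∃ u, G.Adj v u ∧ soleSettledMarking (E.cfg k) u v ∧ E.cfg (k + 1) b = mobile u) := by
  rcases E.rule_mobile k b v hb with ⟨u, hadj, hsole, htgt⟩ | ⟨hno, u, hadj, hemp, htgt⟩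
    | ⟨hncm, htgt⟩
  · rcases E.upd_move k b u htgt with hd | ⟨ho, _⟩ | ⟨v', hv', hor⟩
    · exact Or.inr (Or.inl hd)
    · rw [hb] at ho; cases ho
    · rw [hb] at hv'
      have hvv : v = v' := by injection hv'
      subst hvv
      rcases hor with ⟨hemp, _⟩ | ⟨_, hnext⟩
      · obtain ⟨j, hj⟩ := hsole.1
        exact absurd ⟨j, some v, hj⟩ hemp.1
      · exact Or.inr (Or.inr (Or.inr ⟨u, hadj, hsole, hnext⟩))
  · rcases E.upd_move k b u htgt with hd | ⟨ho, _⟩ | ⟨v', hv', hor⟩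
    · exact Or.inr (Or.inl hd)
    · rw [hb] at ho; cases ho
    · rw [hb] at hv'
      have hvv : v = v' := by injection hv'
      subst hvv
      rcases hor with ⟨_, hnext⟩ | ⟨hsole, _⟩
      · exact Or.inr (Or.inr (Or.inl ⟨u, hadj, hemp, hnext⟩))
      · exact absurd ⟨u, hadj, hsole⟩ hno
  · exact Or.inl ⟨hncm, by rw [E.upd_stay k b htgt]; exact hb⟩

/-- Where could a mobile agent at `w` at step `k+1` come from. -/
lemma prev_of_mobile {k y w} (h : E.cfg (k + 1) y = mobile w) :
    (E.cfg k y = mobile w ∧ ¬ canMoveFrom G (E.cfg k) w) ∨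
    (w = s ∧ E.cfg k y = outside ∧ canEnter (E.cfg k) s y ∧ ¬ emptyAt (E.cfg k) s) ∨
    (∃ v', E.cfg k y = mobile v' ∧ G.Adj v' w ∧ soleSettledMarking (E.cfg k) w v') := by
  cases hc : E.cfg k y with
  | outside =>
    rcases outside_step_cases E hc with ⟨_, h2⟩ | ⟨hce, hor⟩
    · rw [h2] at h; cases h
    · rcases hor with hd | ⟨_, hst⟩ | ⟨hne, hm⟩
      · rw [hd] at h; cases h
      · rw [hst] at h; cases h
      · rw [hm] at h
        have hws : s = w := by injection h
        subst hws
        exact Or.inr (Or.inl ⟨rfl, rfl, hce, hne⟩)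
  | mobile v =>
    rcases mobile_step_cases E hc with ⟨hncm, hst⟩ | hd | ⟨u, _, _, hst⟩ | ⟨u, hadj, hsole, hm⟩
    · rw [hst] at h
      have hvw : v = w := by injection h
      subst hvw
      exact Or.inl ⟨rfl, hncm⟩
    · rw [hd] at h; cases h
    · rw [hst] at h; cases h
    · rw [hm] at h
      have huw : u = w := by injection h
      subst huw
      exact Or.inr (Or.inr ⟨v, rfl, hadj, hsole⟩)
  | settled v m => rw [settled_step E hc] at h; cases h
  | deleted => rw [deleted_step E hc] at h; cases h

/-- Where could a settled agent at step `k+1` come from. -/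
lemma prev_of_settled {k j v m} (h : E.cfg (k + 1) j = settled v m) :
    E.cfg k j = settled v m ∨
    (v = s ∧ m = none ∧ E.cfg k j = outside ∧ emptyAt (E.cfg k) s) ∨
    (∃ z, m = some z ∧ E.cfg k j = mobile z ∧ G.Adj z v ∧ emptyAt (E.cfg k) v) := by
  cases hc : E.cfg k j with
  | outside =>
    rcases outside_step_cases E hc with ⟨_, h2⟩ | ⟨hce, hor⟩
    · rw [h2] at h; cases h
    · rcases hor with hd | ⟨hemp, hst⟩ | ⟨_, hm⟩
      · rw [hd] at h; cases h
      · rw [hst] at h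
        have h1 : s = v := by injection h
        have h2 : none = m := by injection h
        subst h1; subst h2
        exact Or.inr (Or.inl ⟨rfl, rfl, rfl, hemp⟩)
      · rw [hm] at h; cases h
  | mobile z =>
    rcases mobile_step_cases E hc with ⟨_, hst⟩ | hd | ⟨u, hadj, hemp, hst⟩ | ⟨u, _, _, hm⟩
    · rw [hst] at h; cases h
    · rw [hd] at h; cases h
    · rw [hst] at h
      have h1 : u = v := by injection h
      have h2 : some z = m := by injection h
      subst h1; subst h2
      exact Or.inr (Or.inr ⟨z, rfl, rfl, hadj, hemp⟩)
    · rw [hm] at h; cases h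
  | settled v' m' =>
    have hst := settled_step E hc
    rw [hst] at h
    exact Or.inl h
  | deleted => rw [deleted_step E hc] at h; cases h

/-- Every mobile agent sits on a settled vertex. -/
lemma mobile_settledAt : ∀ k i v, E.cfg k i = mobile v → settledAt (E.cfg k) v := by
  intro k
  induction k with
  | zero => intro i v h; rw [E.init i] at h; cases h
  | succ k IH =>
    intro i v h
    rcases prev_of_mobile E h with ⟨h1, _⟩ | ⟨hws, _, _, hne⟩ | ⟨v', _, _, hsole⟩
    · exact settledAt_step E (IH i v h1)
    · subst hws
      rcases Classical.em (settledAt (E.cfg k) v) with hs | hs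
      · exact settledAt_step E hs
      · rcases Classical.em (mobileAt (E.cfg k) v) with hm | hm
        · obtain ⟨j, hj⟩ := hm
          exact settledAt_step E (IH j v hj)
        · exact absurd ⟨hs, hm⟩ hne
    · obtain ⟨⟨j, hj⟩, _⟩ := hsole
      exact settledAt_step E ⟨j, some v', hj⟩

/-- A non-empty vertex is settled. -/
lemma not_empty_settled {k w} (h : ¬ emptyAt (E.cfg k) w) : settledAt (E.cfg k) w := by
  rcases Classical.em (settledAt (E.cfg k) w) with hs | hs
  · exact hs
  · rcases Classical.em (mobileAt (E.cfg k) w) with hm | hm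
    · obtain ⟨j, hj⟩ := hm
      exact mobile_settledAt E k j w hj
    · exact absurd ⟨hs, hm⟩ h

/-- Marks point along edges to settled vertices. -/
lemma settled_adj : ∀ k j u z, E.cfg k j = settled u (some z) →
    G.Adj u z ∧ settledAt (E.cfg k) z := by
  intro k
  induction k with
  | zero => intro j u z h; rw [E.init j] at h; cases h
  | succ k IH =>
    intro j u z h
    rcases prev_of_settled E h with h1 | ⟨_, hmn, _⟩ | ⟨z', hz, hmob, hadj, _⟩
    · obtain ⟨ha, hs⟩ := IH j u z h1
      exact ⟨ha, settledAt_step E hs⟩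
    · cases hmn
    · have hzz : z = z' := by injection hz
      subst hzz
      exact ⟨hadj.symm, settledAt_step E (mobile_settledAt E k j z hmob)⟩

/-- Every settled vertex has a chain of marks leading to the source. -/
lemma chain_of_settled : ∀ k v, settledAt (E.cfg k) v →
    ∃ (m : ℕ) (f : ℕ → V), f 0 = v ∧ f m = s ∧
      ∀ j < m, ∃ i, E.cfg k i = settled (f j) (some (f (j + 1))) := by
  intro k
  induction k with
  | zero => intro v h; obtain ⟨i, m, hi⟩ := h; rw [E.init i] at hi; cases hi
  | succ k IH =>
    intro v h
    obtain ⟨i, mk, hi⟩ := h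
    rcases prev_of_settled E hi with h1 | ⟨hvs, _, _, _⟩ | ⟨z, hz, hmob, _, _⟩
    · obtain ⟨m, f, h0, hm, hch⟩ := IH v ⟨i, mk, h1⟩
      exact ⟨m, f, h0, hm, fun j hj => by
        obtain ⟨jj, hjj⟩ := hch j hj
        exact ⟨jj, settled_step E hjj⟩⟩
    · exact ⟨0, fun _ => v, rfl, hvs, by omega⟩
    · rw [hz] at hi
      obtain ⟨m, g, h0, hm, hch⟩ := IH z (mobile_settledAt E k i z hmob)
      refine ⟨m + 1, fun t => if t = 0 then v else g (t - 1), by simp, by simp [hm], ?_⟩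
      intro j hj
      rcases Nat.eq_zero_or_pos j with hj0 | hj0
      · subst hj0
        refine ⟨i, ?_⟩
        simp only [if_pos rfl, if_neg (by omega : ¬ (0 + 1 = 0))]
        simpa [h0] using hi
      · obtain ⟨jj, hjj⟩ := hch (j - 1) (by omega)
        refine ⟨jj, ?_⟩
        simp only [if_neg (by omega : ¬ j = 0), if_neg (by omega : ¬ (j + 1 = 0))]
        have : j - 1 + 1 = j + 1 - 1 := by omega
        rw [← this]
        exact settled_step E hjj

/-- If any vertex is settled, the source is settled. -/
lemma settled_source {k v} (h : settledAt (E.cfg k) v) : settledAt (E.cfg k) s := by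
  obtain ⟨m, f, h0, hm, hch⟩ := chain_of_settled E k v h
  rcases Nat.eq_zero_or_pos m with h1 | h1
  · subst h1; rw [h0] at hm; exact hm ▸ h
  · obtain ⟨jj, hjj⟩ := hch (m - 1) (by omega)
    have : m - 1 + 1 = m := by omega
    rw [this, hm] at hjj
    exact (settled_adj E k jj _ s hjj).2

/-- No settled agent with a mark sits at the source. -/
lemma settledSome_ne_source : ∀ k j u z, E.cfg k j = settled u (some z) → u ≠ s := by
  intro k
  induction k with
  | zero => intro j u z h; rw [E.init j] at h; cases h
  | succ k IH =>
    intro j u z h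
    rcases prev_of_settled E h with h1 | ⟨_, hmn, _⟩ | ⟨z', _, hmob, _, hemp⟩
    · exact IH j u z h1
    · cases hmn
    · intro hus
      subst hus
      exact hemp.1 (settled_source E (mobile_settledAt E k j z' hmob))

/-- A settled agent with no mark sits at the source. -/
lemma settledNone_source : ∀ k j u, E.cfg k j = settled u none → u = s := by
  intro k
  induction k with
  | zero => intro j u h; rw [E.init j] at h; cases h
  | succ k IH =>
    intro j u h
    rcases prev_of_settled E h with h1 | ⟨hus, _, _, _⟩ | ⟨z', hz, _, _, _⟩
    · exact IH j u h1
    · exact hus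
    · cases hz

/-- **Key lemma.** If a mobile agent is stuck at `v`, then every tree-child `u`
of `v` carries a mobile agent which is itself stuck. -/
lemma stuck_child_stuck : ∀ k, ∀ i v u j, E.cfg k i = mobile v →
    ¬ canMoveFrom G (E.cfg k) v → E.cfg k j = settled u (some v) →
    ∃ b, E.cfg k b = mobile u ∧ ¬ canMoveFrom G (E.cfg k) u := by
  intro k
  induction k with
  | zero => intro i v u j hi _ _; rw [E.init i] at hi; cases hi
  | succ k IH =>
    intro i v u j hi hs hj
    have hadj_uv : G.Adj u v := (settled_adj E _ _ _ _ hj).1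
    have hmobu : mobileAt (E.cfg (k + 1)) u := by
      by_contra hmu
      exact hs ⟨u, hadj_uv.symm, Or.inl ⟨⟨j, hj⟩, hmu⟩⟩
    obtain ⟨b, hb⟩ := hmobu
    -- `b` was already mobile at `u` at step `k` and stuck there.
    have hbk : E.cfg k b = mobile u ∧ ¬ canMoveFrom G (E.cfg k) u := by
      rcases prev_of_mobile E hb with ⟨h1, h2⟩ | ⟨hus, _, _, _⟩ | ⟨v', hv', hadj, hsole⟩
      · exact ⟨h1, h2⟩
      · exact absurd hus (settledSome_ne_source E (k + 1) j u v hj)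
      · -- `b` child-moved from `v'` into `u`; show `v' = v` and derive a contradiction
        exfalso
        obtain ⟨⟨j', hj'⟩, hnm⟩ := hsole
        have hj'' := settled_step E hj'
        have hjj : j' = j := (E.cap (k + 1)).1 u j' j (some v') (some v) hj'' hj
        subst hjj
        rw [hj''] at hj
        have hvv : v' = v := by
          have : some v' = some v := by injection hj
          injection this
        subst hvv
        -- so `b` was mobile at `v` at step `k`; analyze how `i` became mobile at `v`
        rcases prev_of_mobile E hi with ⟨h1, _⟩ | ⟨hvs, _, hce, _⟩ | ⟨v'', hv'', _, hsole2⟩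
        · have hib : i = b := (E.cap k).2 v' i b h1 hv'
          subst hib
          -- then `i` is mobile both at `v` and `u` at step `k+1`
          rw [hb] at hi
          have huv : u = v' := by injection hi
          rw [huv] at hadj
          exact G.loopless.irrefl v' hadj
        · subst hvs
          exact hce.2 ⟨b, hv'⟩
        · exact hsole2.2 ⟨b, hv'⟩
    obtain ⟨hbmob, hbstuck⟩ := hbk
    refine ⟨b, hb, ?_⟩
    rintro ⟨w, hadj_uw, hw | hw⟩
    · -- a sole settled child of `u` at step `k+1`
      obtain ⟨⟨j₂, hj₂⟩, hnm₂⟩ := hw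
      rcases prev_of_settled E hj₂ with h1 | ⟨_, hmn, _⟩ | ⟨z, hz, hmobz, _, _⟩
      · have hmw : mobileAt (E.cfg k) w := by
          by_contra hmw
          exact hbstuck ⟨w, hadj_uw, Or.inl ⟨⟨j₂, h1⟩, hmw⟩⟩
        obtain ⟨b₂, hb₂, hb₂stuck⟩ := IH b u w j₂ hbmob hbstuck h1
        exact hnm₂ ⟨b₂, stuck_stays E hb₂ hb₂stuck⟩
      · cases hmn
      · have hzz : u = z := by injection hz
        subst hzz
        have hjb : j₂ = b := (E.cap k).2 u j₂ b hmobz hbmob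
        subst hjb
        have := stuck_stays E hbmob hbstuck
        rw [this] at hj₂
        cases hj₂
    · -- an empty neighbour of `u` at step `k+1`
      have hne : ¬ emptyAt (E.cfg k) w := fun he => hbstuck ⟨w, hadj_uw, Or.inr he⟩
      exact hw.1 (settledAt_step E (not_empty_settled E hne))

/-- If a mobile agent at the source is stuck, every vertex is settled. -/
lemma stuck_source_all_settled {k x} (hG : G.Connected) (hx : E.cfg k x = mobile s)
    (hstuck : ¬ canMoveFrom G (E.cfg k) s) : ∀ v, settledAt (E.cfg k) v := by
  have key : ∀ m (f : ℕ → V), f m = s →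
      (∀ j < m, ∃ jj, E.cfg k jj = settled (f j) (some (f (j + 1)))) →
      ∃ b, E.cfg k b = mobile (f 0) ∧ ¬ canMoveFrom G (E.cfg k) (f 0) := by
    intro m
    induction m with
    | zero => intro f h0 _; rw [h0]; exact ⟨x, hx, hstuck⟩
    | succ m IHm =>
      intro f hm hch
      obtain ⟨jj, hjj⟩ := hch 0 (Nat.succ_pos m)
      obtain ⟨b, hb, hbs⟩ := IHm (fun t => f (t + 1)) hm (fun j hj => hch (j + 1) (by omega))
      exact stuck_child_stuck E k b (f 1) (f 0) jj hb hbs hjj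
  have stuckAt : ∀ v, settledAt (E.cfg k) v →
      ∃ b, E.cfg k b = mobile v ∧ ¬ canMoveFrom G (E.cfg k) v := by
    intro v hv
    obtain ⟨m, f, h0, hm, hch⟩ := chain_of_settled E k v hv
    rw [← h0]
    exact key m f hm hch
  have step : ∀ a c : V, G.Adj a c → settledAt (E.cfg k) a → settledAt (E.cfg k) c := by
    intro a c hadj ha
    obtain ⟨b, hb, hbs⟩ := stuckAt a ha
    have hne : ¬ emptyAt (E.cfg k) c := fun he => hbs ⟨c, hadj, Or.inr he⟩
    exact not_empty_settled E hne
  have walk : ∀ (a b : V) (_ : G.Walk a b), settledAt (E.cfg k) a → settledAt (E.cfg k) b := by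
    intro a b w
    induction w with
    | nil => exact id
    | cons h p ih => intro ha; exact ih (step _ _ h ha)
  intro v
  obtain ⟨w⟩ := hG.preconnected s v
  exact walk s v w (mobile_settledAt E k x s hx)

/-- If the configuration is incomplete and the source carries a mobile agent,
the source is mobile-free at the next step. -/
lemma source_clears {k} (hG : G.Connected) (hinc : ¬ ∀ v, settledAt (E.cfg k) v)
    (hm : mobileAt (E.cfg k) s) : ¬ mobileAt (E.cfg (k + 1)) s := by
  obtain ⟨x, hx⟩ := hm
  have hcm : canMoveFrom G (E.cfg k) s := by
    by_contra h
    exact hinc (stuck_source_all_settled E hG hx h)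
  rintro ⟨y, hy⟩
  rcases prev_of_mobile E hy with ⟨_, h2⟩ | ⟨_, _, hce, _⟩ | ⟨v', _, _, hsole⟩
  · exact h2 hcm
  · exact hce.2 ⟨x, hx⟩
  · obtain ⟨⟨j, hj⟩, _⟩ := hsole
    exact settledSome_ne_source E k j s v' hj rfl

/-- Non-outside agents never return outside. -/
lemma not_outside_step {k i} (h : E.cfg k i ≠ outside) : E.cfg (k + 1) i ≠ outside := by
  cases hc : E.cfg k i with
  | outside => exact absurd hc h
  | mobile v =>
    rcases mobile_step_cases E hc with ⟨_, h1⟩ | h1 | ⟨u, _, _, h1⟩ | ⟨u, _, _, h1⟩ <;>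
      simp [h1]
  | settled v m => simp [settled_step E hc]
  | deleted => simp [deleted_step E hc]

lemma not_outside_mono {k k' i} (hk : k ≤ k') (h : E.cfg k i ≠ outside) :
    E.cfg k' i ≠ outside := by
  induction k', hk using Nat.le_induction with
  | base => exact h
  | succ n hn ih => exact not_outside_step E ih

/-- At most one agent leaves the outside per step. -/
lemma enter_unique {k i₁ i₂} (h1 : E.cfg k i₁ = outside) (h1' : E.cfg (k + 1) i₁ ≠ outside)
    (h2 : E.cfg k i₂ = outside) (h2' : E.cfg (k + 1) i₂ ≠ outside) : i₁ = i₂ := by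
  have hce1 : canEnter (E.cfg k) s i₁ := by
    rcases outside_step_cases E h1 with ⟨_, hh⟩ | ⟨hce, _⟩
    · exact absurd hh h1'
    · exact hce
  have hce2 : canEnter (E.cfg k) s i₂ := by
    rcases outside_step_cases E h2 with ⟨_, hh⟩ | ⟨hce, _⟩
    · exact absurd hh h2'
    · exact hce
  by_contra hne
  rcases Nat.lt_or_ge i₁ i₂ with hlt | hge
  · exact hce2.1 i₁ hlt h1
  · exact hce1.1 i₂ (by omega) h2

/-- The set of agents that have entered is finite. -/
lemma nonoutside_finite : ∀ k, {i : ℕ | E.cfg k i ≠ outside}.Finite := by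
  intro k
  induction k with
  | zero =>
    have : {i : ℕ | E.cfg 0 i ≠ outside} = ∅ := by
      ext i; simp [E.init i]
    rw [this]; exact Set.finite_empty
  | succ k IH =>
    have hsub : {i : ℕ | E.cfg (k + 1) i ≠ outside} ⊆
        {i : ℕ | E.cfg k i ≠ outside} ∪
        {i : ℕ | E.cfg k i = outside ∧ E.cfg (k + 1) i ≠ outside} := by
      intro i hi
      rcases Classical.em (E.cfg k i = outside) with h | h
      · exact Or.inr ⟨h, hi⟩
      · exact Or.inl h
    refine Set.Finite.subset (Set.Finite.union IH ?_) hsub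
    apply Set.Subsingleton.finite
    intro a ha b hb
    exact enter_unique E ha.1 ha.2 hb.1 hb.2

/-- If the source is mobile-free, some agent enters. -/
lemma enters {k} (hnm : ¬ mobileAt (E.cfg k) s) :
    ∃ i, E.cfg k i = outside ∧ E.cfg (k + 1) i ≠ outside := by
  classical
  have hfin := nonoutside_finite E k
  have hinf : {i : ℕ | E.cfg k i ≠ outside}ᶜ.Infinite := Set.Finite.infinite_compl hfin
  have hne : ∃ i, E.cfg k i = outside := by
    obtain ⟨i, hi⟩ := hinf.nonempty
    exact ⟨i, by simpa using hi⟩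
  let i₀ := Nat.find hne
  have hi₀ : E.cfg k i₀ = outside := Nat.find_spec hne
  have hce : canEnter (E.cfg k) s i₀ := by
    refine ⟨fun j hj => ?_, hnm⟩
    exact Nat.find_min hne hj
  refine ⟨i₀, hi₀, ?_⟩
  rcases outside_step_cases E hi₀ with ⟨hn, _⟩ | ⟨_, hout⟩
  · exact absurd hce hn
  · rcases hout with h | ⟨_, h⟩ | ⟨_, h⟩ <;> simp [h]

/-- **Counting bound.** If the configuration at step `T` is still incomplete then
`T ≤ 4n - 3 + c·T`. -/
lemma incomplete_bound [Fintype V] (hG : G.Connected) (c : ℝ)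
    (hdel : ∀ t : ℕ,
      (Set.ncard {q : ℕ × ℕ | q.1 < t ∧ E.cfg (q.1 + 1) q.2 = AgentState.deleted ∧
        E.cfg q.1 q.2 ≠ AgentState.deleted} : ℝ) ≤ c * t / 2)
    {T : ℕ} (hT : ¬ ∀ v, settledAt (E.cfg T) v) :
    (T : ℝ) ≤ 4 * (Fintype.card V : ℝ) - 3 + c * T := by
  classical
  set n := Fintype.card V with hn
  have hn1 : 1 ≤ n := Fintype.card_pos_iff.mpr hG.nonempty
  have hInc : ∀ k, k ≤ T → ¬ ∀ v, settledAt (E.cfg k) v := by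
    intro k hk hall
    exact hT fun v => settledAt_mono E hk (hall v)
  obtain ⟨v₀, hv₀⟩ : ∃ v₀, ¬ settledAt (E.cfg T) v₀ := by
    by_contra h
    push_neg at h
    exact hT h
  -- steps where the source is free / occupied by a mobile agent
  set A : Finset ℕ := (Finset.range T).filter (fun k => ¬ mobileAt (E.cfg k) s) with hA
  set B : Finset ℕ := (Finset.range T).filter (fun k => mobileAt (E.cfg k) s) with hB
  have hABcard : B.card + A.card = T := by
    have := Finset.card_filter_add_card_filter_not
      (s := Finset.range T) (p := fun k => mobileAt (E.cfg k) s)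
    simpa [hA, hB] using this
  -- every source-occupied step is followed by a source-free step
  have hBA : B.card ≤ A.card + 1 := by
    have hmaps : ∀ k ∈ B, k + 1 ∈ A ∪ {T} := by
      intro k hk
      rw [hB, Finset.mem_filter, Finset.mem_range] at hk
      have hclear := source_clears E hG (hInc k (le_of_lt hk.1)) hk.2
      rcases Nat.lt_or_ge (k + 1) T with h | h
      · refine Finset.mem_union_left _ ?_
        rw [hA, Finset.mem_filter, Finset.mem_range]
        exact ⟨h, hclear⟩
      · have hT' : k + 1 = T := by omega
        refine Finset.mem_union_right _ ?_
        simp [hT']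
    have hcardle : B.card ≤ (A ∪ {T}).card :=
      Finset.card_le_card_of_injOn (· + 1) hmaps (fun a _ b _ h => by simpa using h)
    have hAun : (A ∪ {T}).card ≤ A.card + 1 :=
      le_trans (Finset.card_union_le _ _) (by simp)
    omega
  -- entered agents
  set Oset : Finset ℕ := (nonoutside_finite E T).toFinset with hOset
  have hAO : A.card ≤ Oset.card := by
    set g : ℕ → ℕ := fun k =>
      if h : ∃ i, E.cfg k i = outside ∧ E.cfg (k + 1) i ≠ outside then h.choose else 0
      with hg
    have hgspec : ∀ k ∈ A, E.cfg k (g k) = outside ∧ E.cfg (k + 1) (g k) ≠ outside := by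
      intro k hk
      rw [hA, Finset.mem_filter] at hk
      have hex := enters E hk.2
      rw [hg]
      simp only [dif_pos hex]
      exact hex.choose_spec
    have hmaps : ∀ k ∈ A, g k ∈ Oset := by
      intro k hk
      have hspec := hgspec k hk
      have hkT : k + 1 ≤ T := by
        have := hk
        rw [hA, Finset.mem_filter, Finset.mem_range] at this
        omega
      rw [hOset, Set.Finite.mem_toFinset]
      exact not_outside_mono E hkT hspec.2
    refine Finset.card_le_card_of_injOn g hmaps ?_
    intro k₁ hk₁ k₂ hk₂ heq
    by_contra hne
    rcases Nat.lt_or_ge k₁ k₂ with hlt | hge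
    · have h1 := (hgspec k₁ hk₁).2
      have h2 := (hgspec k₂ hk₂).1
      exact not_outside_mono E (by omega : k₁ + 1 ≤ k₂) h1 (heq ▸ h2)
    · have hlt : k₂ < k₁ := by omega
      have h1 := (hgspec k₂ hk₂).2
      have h2 := (hgspec k₁ hk₁).1
      exact not_outside_mono E (by omega : k₂ + 1 ≤ k₁) h1 (heq ▸ h2)
  -- partition the entered agents by their state at time T
  set SA : Finset ℕ := Oset.filter (fun i => ∃ v m, E.cfg T i = settled v m) with hSA
  set MA : Finset ℕ := Oset.filter (fun i => ∃ v, E.cfg T i = mobile v) with hMA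
  set DA : Finset ℕ := Oset.filter (fun i => E.cfg T i = deleted) with hDA
  have hOsub : Oset ⊆ SA ∪ MA ∪ DA := by
    intro i hi
    have hio : E.cfg T i ≠ outside := by
      have := hi
      rw [hOset, Set.Finite.mem_toFinset] at this
      exact this
    cases hc : E.cfg T i with
    | outside => exact absurd hc hio
    | mobile v => exact Finset.mem_union_left _ (Finset.mem_union_right _
        (Finset.mem_filter.mpr ⟨hi, ⟨v, hc⟩⟩))
    | settled v m => exact Finset.mem_union_left _ (Finset.mem_union_left _
        (Finset.mem_filter.mpr ⟨hi, ⟨v, m, hc⟩⟩))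
    | deleted => exact Finset.mem_union_right _ (Finset.mem_filter.mpr ⟨hi, hc⟩)
  have hOcard : Oset.card ≤ SA.card + MA.card + DA.card :=
    le_trans (Finset.card_le_card hOsub)
      (le_trans (Finset.card_union_le _ _)
        (by gcongr; exact Finset.card_union_le _ _))
  -- settled agents: at most n - 1
  have hSAcard : SA.card ≤ n - 1 := by
    set φ : ℕ → V := fun i =>
      if h : ∃ v m, E.cfg T i = settled v m then h.choose else v₀ with hφ
    have hφspec : ∀ i ∈ SA, ∃ m, E.cfg T i = settled (φ i) m := by
      intro i hi
      rw [hSA, Finset.mem_filter] at hi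
      rw [hφ]
      simp only [dif_pos hi.2]
      exact hi.2.choose_spec
    have hmaps : ∀ i ∈ SA, φ i ∈ Finset.univ.erase v₀ := by
      intro i hi
      obtain ⟨m, hm⟩ := hφspec i hi
      refine Finset.mem_erase.mpr ⟨?_, Finset.mem_univ _⟩
      intro heq
      exact hv₀ ⟨i, m, heq ▸ hm⟩
    have := Finset.card_le_card_of_injOn φ hmaps ?_
    · rwa [Finset.card_erase_of_mem (Finset.mem_univ _), Finset.card_univ] at this
    · intro i₁ hi₁ i₂ hi₂ heq
      obtain ⟨m₁, hm₁⟩ := hφspec i₁ hi₁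
      obtain ⟨m₂, hm₂⟩ := hφspec i₂ hi₂
      exact (E.cap T).1 (φ i₁) i₁ i₂ m₁ m₂ hm₁ (heq ▸ hm₂)
  -- mobile agents: at most n - 1
  have hMAcard : MA.card ≤ n - 1 := by
    set φ : ℕ → V := fun i =>
      if h : ∃ v, E.cfg T i = mobile v then h.choose else v₀ with hφ
    have hφspec : ∀ i ∈ MA, E.cfg T i = mobile (φ i) := by
      intro i hi
      rw [hMA, Finset.mem_filter] at hi
      rw [hφ]
      simp only [dif_pos hi.2]
      exact hi.2.choose_spec
    have hmaps : ∀ i ∈ MA, φ i ∈ Finset.univ.erase v₀ := by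
      intro i hi
      refine Finset.mem_erase.mpr ⟨?_, Finset.mem_univ _⟩
      intro heq
      exact hv₀ (heq ▸ mobile_settledAt E T i (φ i) (hφspec i hi))
    have := Finset.card_le_card_of_injOn φ hmaps ?_
    · rwa [Finset.card_erase_of_mem (Finset.mem_univ _), Finset.card_univ] at this
    · intro i₁ hi₁ i₂ hi₂ heq
      exact (E.cap T).2 (φ i₁) i₁ i₂ (hφspec i₁ hi₁) (heq ▸ hφspec i₂ hi₂)
  -- deleted agents: at most c·T/2
  have hDAcard : (DA.card : ℝ) ≤ c * T / 2 := by
    set delset : Set (ℕ × ℕ) := {q : ℕ × ℕ | q.1 < T ∧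
      E.cfg (q.1 + 1) q.2 = AgentState.deleted ∧ E.cfg q.1 q.2 ≠ AgentState.deleted}
      with hdelset
    have hdelfin : delset.Finite := by
      refine Set.Finite.subset (Set.Finite.prod (Set.finite_Iio T) DA.finite_toSet) ?_
      rintro ⟨k, i⟩ ⟨hk, hd, _⟩
      refine ⟨hk, ?_⟩
      rw [hDA]
      simp only [Finset.coe_filter, Set.mem_setOf_eq]
      have hdT : E.cfg T i = deleted := deleted_mono E (by omega : k + 1 ≤ T) hd
      refine ⟨?_, hdT⟩
      rw [hOset, Set.Finite.mem_toFinset]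
      simp [hdT]
    have hinj : (↑DA : Set ℕ).ncard ≤ delset.ncard := by
      have hdel_ex : ∀ i ∈ DA, ∃ t, E.cfg (t + 1) i = deleted := by
        intro i hi
        rw [hDA, Finset.mem_filter] at hi
        exact ⟨T, deleted_step E hi.2⟩
      set ψ : ℕ → ℕ × ℕ := fun i =>
        if h : ∃ t, E.cfg (t + 1) i = deleted then (Nat.find h, i) else (0, i) with hψ
      refine Set.ncard_le_ncard_of_injOn ψ ?_ ?_ hdelfin
      · intro i hi
        rw [Finset.mem_coe] at hi
        have hex := hdel_ex i hi
        have hiT : E.cfg T i = deleted := by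
          have := hi; rw [hDA, Finset.mem_filter] at this; exact this.2
        rw [hψ]
        simp only [dif_pos hex]
        have hfind := Nat.find_spec hex
        have hT1 : 1 ≤ T := by
          by_contra hT0
          have : T = 0 := by omega
          rw [this, E.init i] at hiT
          cases hiT
        have hfindT : Nat.find hex < T := by
          have : E.cfg (T - 1 + 1) i = deleted := by
            have h2 : T - 1 + 1 = T := by omega
            rw [h2]; exact hiT
          have := Nat.find_min' hex this
          omega
        refine ⟨hfindT, hfind, ?_⟩
        cases hfe : Nat.find hex with
        | zero => rw [E.init i]; simp
        | succ p =>
          have := Nat.find_min hex (m := p) (by omega)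
          simpa using this
      · intro i₁ _ i₂ _ heq
        have h2nd : (ψ i₁).2 = (ψ i₂).2 := by rw [heq]
        rw [hψ] at h2nd
        by_cases h1 : ∃ t, E.cfg (t + 1) i₁ = deleted <;>
          by_cases h2 : ∃ t, E.cfg (t + 1) i₂ = deleted <;>
          simpa [h1, h2] using h2nd
    rw [Set.ncard_coe_finset] at hinj
    calc (DA.card : ℝ) ≤ (delset.ncard : ℝ) := by exact_mod_cast hinj
      _ ≤ c * T / 2 := hdel T
  -- combine everything
  have hnat : T ≤ 2 * (n - 1) + 2 * (n - 1) + 2 * DA.card + 1 := by omega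
  have hcast : (T : ℝ) ≤ 2 * ((n : ℝ) - 1) + 2 * ((n : ℝ) - 1) + 2 * (DA.card : ℝ) + 1 := by
    have h1 : ((2 * (n - 1) + 2 * (n - 1) + 2 * DA.card + 1 : ℕ) : ℝ)
        = 2 * ((n : ℝ) - 1) + 2 * ((n : ℝ) - 1) + 2 * (DA.card : ℝ) + 1 := by
      have : ((n - 1 : ℕ) : ℝ) = (n : ℝ) - 1 := by
        rw [Nat.cast_sub hn1]; simp
      push_cast [this]
      ring
    rw [← h1]
    exact_mod_cast hnat
  rw [hn] at *
  linarith [hDAcard]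

end Stmt16Aux
/-- In the synchronous model on a graph environment `G` with
`n` vertices, if for every step `t` at most `c·t/2` agents are deleted before
step `t` (where `0 ≤ c < 1`), then the makespan of the dispersal rule — the first
step at which the settled agents and their marks form a spanning tree of `G` —
is at most `4(1−c)⁻¹·n`. -/
theorem stmt16 {V : Type} [Fintype V] (G : SimpleGraph V) (hG : G.Connected) (s : V)
    (c : ℝ) (hc0 : 0 ≤ c) (hc1 : c < 1) (E : SyncExec V G s)
    (hdel : ∀ t : ℕ,
      (Set.ncard {q : ℕ × ℕ | q.1 < t ∧ E.cfg (q.1 + 1) q.2 = AgentState.deleted ∧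
        E.cfg q.1 q.2 ≠ AgentState.deleted} : ℝ) ≤ c * t / 2) :
    ∃ k : ℕ, (k : ℝ) ≤ 4 * (1 - c)⁻¹ * (Fintype.card V : ℝ) ∧
      (∀ v, settledAt (E.cfg k) v) ∧ IsMarkTree G s (E.cfg k) := by
  classical
  obtain ⟨v₁⟩ := hG.nonempty
  set n := Fintype.card V with hn
  have hn1 : 1 ≤ n := Fintype.card_pos_iff.mpr hG.nonempty
  have h1c : (0 : ℝ) < 1 - c := by linarith
  have key : ∀ T : ℕ, ¬ (∀ v, settledAt (E.cfg T) v) →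
      (T : ℝ) ≤ 4 * (n : ℝ) - 3 + c * T :=
    fun T hT => Stmt16Aux.incomplete_bound E hG c hdel hT
  have hex : ∃ T : ℕ, ∀ v, settledAt (E.cfg T) v := by
    by_contra h
    push_neg at h
    obtain ⟨T, hTgt⟩ := exists_nat_gt ((4 * (n : ℝ) - 3) / (1 - c))
    have hT' : ¬ ∀ v, settledAt (E.cfg T) v := by
      obtain ⟨v, hv⟩ := h T
      exact fun hall => hv (hall v)
    have hb := key T hT'
    have h2 : (T : ℝ) * (1 - c) ≤ 4 * (n : ℝ) - 3 := by nlinarith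
    have h3 : (T : ℝ) ≤ (4 * (n : ℝ) - 3) / (1 - c) := (le_div_iff₀ h1c).mpr h2
    linarith
  set K := Nat.find hex with hK
  have hPK : ∀ v, settledAt (E.cfg K) v := Nat.find_spec hex
  have hK0 : K ≠ 0 := by
    intro h0
    have hp := hPK v₁
    rw [h0] at hp
    obtain ⟨i, m, hi⟩ := hp
    rw [E.init i] at hi
    cases hi
  have hprev : ¬ ∀ v, settledAt (E.cfg (K - 1)) v := Nat.find_min hex (by omega)
  have hb := key (K - 1) hprev
  refine ⟨K, ?_, hPK, hPK s, ?_, ?_, ?_⟩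
  · have hcast : ((K - 1 : ℕ) : ℝ) = (K : ℝ) - 1 := by
      rw [Nat.cast_sub (by omega : 1 ≤ K)]; simp
    rw [hcast] at hb
    have h2 : ((K : ℝ) - 1) * (1 - c) ≤ 4 * (n : ℝ) - 3 := by nlinarith
    have h3 : (K : ℝ) * (1 - c) ≤ 4 * (n : ℝ) := by nlinarith
    have h4 : (K : ℝ) ≤ (4 * (n : ℝ)) / (1 - c) := (le_div_iff₀ h1c).mpr h3
    calc (K : ℝ) ≤ (4 * (n : ℝ)) / (1 - c) := h4
      _ = 4 * (1 - c)⁻¹ * (n : ℝ) := by rw [div_eq_mul_inv]; ring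
  · intro i v m h
    constructor
    · intro hm
      rw [hm] at h
      exact Stmt16Aux.settledNone_source E K i v h
    · intro hv
      cases m with
      | none => rfl
      | some z => exact absurd hv (Stmt16Aux.settledSome_ne_source E K i v z h)
  · intro i v u h
    exact Stmt16Aux.settled_adj E K i v u h
  · intro v hv
    exact Stmt16Aux.chain_of_settled E K v hv
end
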